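/- arXiv:1801.00737 — 9 statements merged into one kernel-verified Lean document; each statement's English description precedes it below -/
import Mathlib

section
/- For every even integer n ≥ 4, the maximum size of a family of Hamiltonian paths of the complete graph K_n on vertex set {1,…,n} such that the union of any two paths in the family contains an odd cycle equals the number of balanced bipartitions of {1,…,n}, namely (1/2)·C(n, n/2). -/
open SimpleGraph

/-- `G` contains a cycle of length `k` as a subgraph. -/
def ContainsCycleLen {V : Type*} (G : SimpleGraph V) (k : ℕ) : Prop :=
  ∃ (u : V) (w : G.Walk u u), w.IsCycle ∧ w.length = k

/-- `H` is a Hamiltonian path of the complete graph on `Fin n`: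
it is the path graph on `n` vertices up to a relabeling of the vertices. -/
def IsHamPathGraph {n : ℕ} (H : SimpleGraph (Fin n)) : Prop :=
  ∃ σ : Equiv.Perm (Fin n), ∀ a b, H.Adj a b ↔ (pathGraph n).Adj (σ a) (σ b)

/-- The maximum size of a family of Hamiltonian paths of `K_n` that are
pairwise `C_k`-creating. -/
noncomputable def Hnum (n k : ℕ) : ℕ :=
  sSup {m | ∃ F : Finset (SimpleGraph (Fin n)), F.card = m ∧
    (∀ G ∈ F, IsHamPathGraph G) ∧
    ∀ G₁ ∈ F, ∀ G₂ ∈ F, G₁ ≠ G₂ → ContainsCycleLen (G₁ ⊔ G₂) k}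

/-- `H` is a perfect matching (as a graph): every vertex has a unique neighbor. -/
def IsPMGraph {V : Type*} (H : SimpleGraph V) : Prop :=
  ∀ v : V, ∃! w : V, H.Adj v w

/-- The maximum size of a family of perfect matchings of `K_n` that are
pairwise `C_k`-creating. -/
noncomputable def Mnum (n k : ℕ) : ℕ :=
  sSup {m | ∃ F : Finset (SimpleGraph (Fin n)), F.card = m ∧
    (∀ G ∈ F, IsPMGraph G) ∧
    ∀ G₁ ∈ F, ∀ G₂ ∈ F, G₁ ≠ G₂ → ContainsCycleLen (G₁ ⊔ G₂) k}

/-!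
A Hamiltonian path `H` of `K_n` is connected and bipartite, and for even `n` both colour classes
have `n / 2` vertices, so `H` determines a balanced bipartition, represented by its class
`H.evenSide v` containing a fixed vertex `v`. The union of two Hamiltonian paths contains an odd
cycle iff it is not 2-colourable; as both paths are connected, a 2-colouring of the union exists
iff the two paths induce the same bipartition. So an admissible family is exactly a family of
paths with pairwise distinct bipartitions, and every balanced bipartition is induced by a
relabelled path `0 - 1 - ⋯ - (n-1)`, which gives `(1/2) C(n, n/2)` as the maximum.
-/

open Finset

theorem Fin.card_filter_val_mod_two_eq {n r : ℕ} (hn : Even n) (hr : r < 2) :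
    #{i : Fin n | i.val % 2 = r} = n / 2 := by
  obtain ⟨m, rfl⟩ := hn
  refine card_eq_of_bijective (fun k hk => ⟨2 * k + r, by omega⟩) ?_ ?_ ?_
  · intro i hi
    rw [mem_filter] at hi
    exact ⟨i.val / 2, by omega, Fin.ext (by simp only; omega)⟩
  · intro k _
    simp [Nat.add_mod, hr]
  · intro k l _ _ h
    simpa using h

theorem Finset.exists_perm_mem_iff {α : Type*} [Fintype α] [DecidableEq α] {S T : Finset α}
    (h : #S = #T) : ∃ σ : Equiv.Perm α, ∀ x, σ x ∈ T ↔ x ∈ S := by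
  have e : {x // x ∈ S} ≃ {x // x ∈ T} := Fintype.equivOfCardEq (by simpa using h)
  have f : {x // x ∉ S} ≃ {x // x ∉ T} := Fintype.equivOfCardEq (by
    rw [Fintype.card_subtype_compl, Fintype.card_subtype_compl]; simp [h])
  refine ⟨Equiv.subtypeCongr e f, fun x => ?_⟩
  by_cases hx : x ∈ S
  · simp [Equiv.subtypeCongr, hx, (e ⟨x, hx⟩).2]
  · simp [Equiv.subtypeCongr, hx, (f ⟨x, hx⟩).2]

theorem Finset.two_mul_card_filter_mem_powersetCard_half {α : Type*} [Fintype α] [DecidableEq α]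
    (hα : Even (Fintype.card α)) (a : α) :
    2 * #{S ∈ powersetCard (Fintype.card α / 2) univ | a ∈ S} =
      (Fintype.card α).choose (Fintype.card α / 2) := by
  have hcompl : #{S ∈ powersetCard (Fintype.card α / 2) univ | a ∈ S} =
      #{S ∈ powersetCard (Fintype.card α / 2) univ | a ∉ S} := by
    refine card_nbij' compl compl ?_ ?_ (fun S _ => compl_compl S) (fun S _ => compl_compl S) <;>
    · intro S hS
      simp only [coe_filter, mem_powersetCard_univ, Set.mem_ofPred_eq, card_compl,
        mem_compl] at hS ⊢
      exact ⟨by have := Nat.even_iff.mp hα; omega, by simpa using hS.2⟩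
  have hsplit := card_filter_add_card_filter_not (s := powersetCard (Fintype.card α / 2) univ)
    (fun S => a ∈ S)
  rw [card_powersetCard, card_univ] at hsplit
  omega

namespace SimpleGraph

variable {V : Type*} {G G₁ G₂ : SimpleGraph V}

def HasOddCycle (G : SimpleGraph V) : Prop :=
  ∃ (u : V) (w : G.Walk u u), w.IsCycle ∧ Odd w.length

theorem Walk.hasOddCycle_of_odd_length {u : V} (w : G.Walk u u) (hw : Odd w.length) :
    G.HasOddCycle := by
  induction h : w.length using Nat.strong_induction_on generalizing u w with
  | _ L ih =>
    subst h
    cases w with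
    | nil => simp at hw
    | @cons _ v _ hadj p =>
      by_cases hp : p.IsPath
      · have hp₀ : p.length ≠ 0 := fun h₀ => by
          cases Walk.eq_of_length_eq_zero h₀
          exact hadj.ne rfl
        refine ⟨u, .cons hadj p, Walk.isCycle_iff_isPath_tail_and_le_length.mpr ⟨by simpa, ?_⟩, hw⟩
        rw [Walk.length_cons] at hw ⊢
        obtain ⟨k, hk⟩ := hw
        omega
      · -- a nontrivial closed subwalk `c` of `p` splits the walk into two shorter closed walks
        obtain ⟨x, c, ⟨ru, rv, rfl⟩, hc⟩ : ∃ (x : V) (c : G.Walk x x), c.IsSubwalk p ∧ ¬ c.Nil := by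
          simpa [Walk.isPath_iff_isSubwalk_imp_nil] using hp
        have hc₀ : 0 < c.length := Walk.not_nil_iff_lt_length.mp hc
        have hlen : (Walk.cons hadj ((ru.append c).append rv)).length =
            c.length + (Walk.cons hadj (ru.append rv)).length := by
          simp only [Walk.length_cons, Walk.length_append]; ring
        rw [hlen] at hw
        rcases Nat.even_or_odd c.length with hce | hco
        · exact ih _ (by omega) _ ((Nat.odd_add'.mp hw).mpr hce) rfl
        · exact ih _ (by rw [hlen, Walk.length_cons]; omega) c hco rfl

theorem hasOddCycle_iff_not_colorable_two : G.HasOddCycle ↔ ¬ G.Colorable 2 := by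
  simp only [two_colorable_iff_forall_loop_even, not_forall, Nat.not_even_iff_odd]
  exact ⟨fun ⟨u, w, _, hw⟩ => ⟨u, w, hw⟩, fun ⟨_, w, hw⟩ => w.hasOddCycle_of_odd_length hw⟩

theorem colorable_two_iff_nonempty_coloring_bool :
    G.Colorable 2 ↔ Nonempty (G.Coloring Bool) :=
  ⟨fun ⟨C⟩ => ⟨G.recolorOfEquiv finTwoEquiv C⟩, fun ⟨C⟩ => by simpa using C.colorable⟩

section EvenSide

variable [Fintype V] {v x : V}

-- For connected bipartite `G`, the colour class of `v`, defined without choosing a colouring.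
open Classical in
noncomputable def evenSide (G : SimpleGraph V) (v : V) : Finset V :=
  {x | ∃ p : G.Walk v x, Even p.length}

theorem mem_evenSide : x ∈ G.evenSide v ↔ ∃ p : G.Walk v x, Even p.length := by
  simp [evenSide]

theorem Coloring.mem_evenSide_iff (C : G.Coloring Bool) (hG : G.Preconnected) :
    x ∈ G.evenSide v ↔ C x = C v := by
  have hC (p : G.Walk v x) : Even p.length ↔ C x = C v := by
    rw [C.even_length_iff_congr p]; cases C x <;> cases C v <;> simp
  exact ⟨fun h => (mem_evenSide.mp h).elim fun p hp => (hC p).mp hp,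
    fun h => mem_evenSide.mpr ⟨(hG v x).some, (hC _).mpr h⟩⟩

theorem colorable_two_sup_iff_evenSide_eq (h₁ : G₁.Preconnected) (h₂ : G₂.Preconnected)
    (hc₁ : G₁.Colorable 2) (hc₂ : G₂.Colorable 2) (v : V) :
    (G₁ ⊔ G₂).Colorable 2 ↔ G₁.evenSide v = G₂.evenSide v := by
  obtain ⟨C₁⟩ := colorable_two_iff_nonempty_coloring_bool.mp hc₁
  obtain ⟨C₂⟩ := colorable_two_iff_nonempty_coloring_bool.mp hc₂
  constructor
  · intro hc
    obtain ⟨C⟩ := colorable_two_iff_nonempty_coloring_bool.mp hc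
    ext x
    rw [Coloring.mem_evenSide_iff (C.comp (Hom.ofLE le_sup_left)) h₁,
      Coloring.mem_evenSide_iff (C.comp (Hom.ofLE le_sup_right)) h₂]
    rfl
  · intro hside
    have hsame (x y : V) : C₁ x = C₁ y ↔ C₂ x = C₂ y := by
      have hBool (C : V → Bool) : C x = C y ↔ (C x = C v ↔ C y = C v) := by
        cases C x <;> cases C y <;> cases C v <;> simp
      rw [hBool C₁, hBool C₂, ← C₁.mem_evenSide_iff h₁, ← C₁.mem_evenSide_iff h₁, hside,
        C₂.mem_evenSide_iff h₂, C₂.mem_evenSide_iff h₂]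
    exact colorable_two_iff_nonempty_coloring_bool.mpr
      ⟨Coloring.mk C₁ fun hab => hab.elim C₁.valid fun h => mt (hsame _ _).mp (C₂.valid h)⟩

theorem hasOddCycle_sup_iff_evenSide_ne (h₁ : G₁.Preconnected) (h₂ : G₂.Preconnected)
    (hc₁ : G₁.Colorable 2) (hc₂ : G₂.Colorable 2) (v : V) :
    (G₁ ⊔ G₂).HasOddCycle ↔ G₁.evenSide v ≠ G₂.evenSide v := by
  rw [hasOddCycle_iff_not_colorable_two, colorable_two_sup_iff_evenSide_eq h₁ h₂ hc₁ hc₂]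

end EvenSide

end SimpleGraph

open SimpleGraph

section HamiltonianPath

variable {n : ℕ}

theorem isHamPathGraph_iff {H : SimpleGraph (Fin n)} :
    IsHamPathGraph H ↔ ∃ σ : Equiv.Perm (Fin n), H = (pathGraph n).comap σ :=
  ⟨fun ⟨σ, hσ⟩ => ⟨σ, by ext a b; exact hσ a b⟩, fun ⟨σ, h⟩ => ⟨σ, fun a b => by rw [h]; rfl⟩⟩

theorem mem_evenSide_comap_pathGraph (σ : Equiv.Perm (Fin n)) {x v : Fin n} :
    x ∈ ((pathGraph n).comap σ).evenSide v ↔ (σ x).val % 2 = (σ v).val % 2 := by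
  rw [Coloring.mem_evenSide_iff ((pathGraph.bicoloring n).comp (Hom.comap σ _))
    ((Iso.comap σ (pathGraph n)).preconnected_iff.mpr (pathGraph_preconnected n))]
  change decide ((σ x).val % 2 = 0) = decide ((σ v).val % 2 = 0) ↔ _
  rw [decide_eq_decide]
  omega

namespace IsHamPathGraph

variable {H : SimpleGraph (Fin n)}

theorem preconnected (hH : IsHamPathGraph H) : H.Preconnected := by
  obtain ⟨σ, rfl⟩ := isHamPathGraph_iff.mp hH
  exact (Iso.comap σ (pathGraph n)).preconnected_iff.mpr (pathGraph_preconnected n)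

theorem colorable_two (hH : IsHamPathGraph H) : H.Colorable 2 := by
  obtain ⟨σ, rfl⟩ := isHamPathGraph_iff.mp hH
  simpa using Coloring.colorable ((pathGraph.bicoloring n).comp (Hom.comap σ _))

theorem card_evenSide (hH : IsHamPathGraph H) (hn : Even n) (v : Fin n) :
    #(H.evenSide v) = n / 2 := by
  obtain ⟨σ, rfl⟩ := isHamPathGraph_iff.mp hH
  rw [← Fin.card_filter_val_mod_two_eq hn (Nat.mod_lt (σ v).val two_pos)]
  exact card_equiv σ fun x => by simp [mem_evenSide_comap_pathGraph]

theorem hasOddCycle_sup_iff {H₁ H₂ : SimpleGraph (Fin n)} (h₁ : IsHamPathGraph H₁)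
    (h₂ : IsHamPathGraph H₂) (v : Fin n) :
    (H₁ ⊔ H₂).HasOddCycle ↔ H₁.evenSide v ≠ H₂.evenSide v :=
  hasOddCycle_sup_iff_evenSide_ne h₁.preconnected h₂.preconnected h₁.colorable_two
    h₂.colorable_two v

end IsHamPathGraph

theorem exists_isHamPathGraph_evenSide_eq (hn : Even n) {S : Finset (Fin n)} (hS : #S = n / 2)
    {v : Fin n} (hv : v ∈ S) : ∃ H, IsHamPathGraph H ∧ H.evenSide v = S := by
  obtain ⟨σ, hσ⟩ := exists_perm_mem_iff (T := {i : Fin n | i.val % 2 = 0})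
    (hS.trans (Fin.card_filter_val_mod_two_eq hn two_pos).symm)
  refine ⟨_, isHamPathGraph_iff.mpr ⟨σ, rfl⟩, ?_⟩
  have hv₀ : (σ v).val % 2 = 0 := by simpa using (hσ v).mpr hv
  ext x
  rw [mem_evenSide_comap_pathGraph, hv₀, ← hσ x]
  simp

end HamiltonianPath

section Family

variable {n : ℕ}

theorem card_le_of_pairwise_hasOddCycle (hn : Even n) (v : Fin n)
    {F : Finset (SimpleGraph (Fin n))} (hF : ∀ H ∈ F, IsHamPathGraph H)
    (hodd : (F : Set (SimpleGraph (Fin n))).Pairwise fun H₁ H₂ => (H₁ ⊔ H₂).HasOddCycle) :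
    #F ≤ #{S ∈ powersetCard (n / 2) univ | v ∈ S} := by
  refine card_le_card_of_injOn (fun H => H.evenSide v) (fun H hH => ?_) fun H₁ h₁ H₂ h₂ h => ?_
  · simp only [coe_filter, mem_powersetCard_univ, Set.mem_ofPred_eq]
    exact ⟨(hF H hH).card_evenSide hn v, mem_evenSide.mpr ⟨.nil, by simp⟩⟩
  · by_contra hne
    exact ((hF H₁ h₁).hasOddCycle_sup_iff (hF H₂ h₂) v |>.mp (hodd h₁ h₂ hne)) h

theorem exists_pairwise_hasOddCycle_card_eq (hn : Even n) (v : Fin n) :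
    ∃ F : Finset (SimpleGraph (Fin n)), #F = #{S ∈ powersetCard (n / 2) univ | v ∈ S} ∧
      (∀ H ∈ F, IsHamPathGraph H) ∧
      (F : Set (SimpleGraph (Fin n))).Pairwise fun H₁ H₂ => (H₁ ⊔ H₂).HasOddCycle := by
  have hsurj : Set.SurjOn (fun H : SimpleGraph (Fin n) => H.evenSide v) {H | IsHamPathGraph H}
      ↑({S ∈ powersetCard (n / 2) (univ : Finset (Fin n)) | v ∈ S}) := by
    intro S hS
    simp only [coe_filter, mem_powersetCard_univ, Set.mem_ofPred_eq] at hS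
    exact exists_isHamPathGraph_evenSide_eq hn hS.1 hS.2
  obtain ⟨F, hF, hinj, himage⟩ := exists_subset_injOn_image_eq_of_surjOn _ _ hsurj
  refine ⟨F, himage ▸ (card_image_of_injOn hinj).symm, hF, fun H₁ h₁ H₂ h₂ hne => ?_⟩
  exact (hF h₁).hasOddCycle_sup_iff (hF h₂) v |>.mpr fun h => hne (hinj h₁ h₂ h)

end Family

/-- For even `n ≥ 4`, the maximum number of Hamiltonian paths of `K_n` whose
pairwise unions contain an odd cycle equals `(1/2) * C(n, n/2)`. -/
theorem stmt_1 (n : ℕ) (hn : 4 ≤ n) (hne : Even n) :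
    2 * sSup {m | ∃ F : Finset (SimpleGraph (Fin n)), F.card = m ∧
      (∀ G ∈ F, IsHamPathGraph G) ∧
      ∀ G₁ ∈ F, ∀ G₂ ∈ F, G₁ ≠ G₂ →
        ∃ (u : Fin n) (w : (G₁ ⊔ G₂).Walk u u), w.IsCycle ∧ Odd w.length}
      = n.choose (n / 2) := by
  let v : Fin n := ⟨0, by omega⟩
  rw [IsGreatest.csSup_eq (a := #{S ∈ powersetCard (n / 2) univ | v ∈ S}) ⟨?_, ?_⟩]
  · simpa using two_mul_card_filter_mem_powersetCard_half (α := Fin n) (by simpa using hne) v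
  · exact exists_pairwise_hasOddCycle_card_eq hne v
  · rintro _ ⟨F, rfl, hF, hodd⟩
    exact card_le_of_pairwise_hasOddCycle hne v hF hodd
end

section
/- H(n,4) ≥ n^{(1/2)n − o(n)}; precisely, for every ε > 0 there exists N such that for all n ≥ N, H(n,4) ≥ n^{(1/2 − ε)n}. -/
open SimpleGraph

variable {n : ℕ}

def fAux (n : ℕ) (σ : Equiv.Perm (Fin (n/2))) (i : Fin n) : Fin n :=
  if h : i.val % 2 = 0 then
    ⟨i.val / 2, by omega⟩
  else
    ⟨(n - n/2) + (σ ⟨i.val / 2, by have := i.isLt; omega⟩).val, by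
      have := (σ ⟨i.val / 2, by have := i.isLt; omega⟩).isLt; omega⟩

lemma fAux_inj (σ : Equiv.Perm (Fin (n/2))) : Function.Injective (fAux n σ) := by
  intro i j hij
  unfold fAux at hij
  split_ifs at hij with h1 h2 h2
  · have : i.val / 2 = j.val / 2 := Fin.val_eq_of_eq hij
    exact Fin.ext (by omega)
  · have h := Fin.val_eq_of_eq hij
    simp only at h
    omega
  · have h := Fin.val_eq_of_eq hij
    simp only at h
    omega
  · have h := Fin.val_eq_of_eq hij
    simp only at h
    have hs : (σ ⟨i.val / 2, by have := i.isLt; omega⟩) = (σ ⟨j.val / 2, by have := j.isLt; omega⟩) :=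
      Fin.ext (by omega)
    have h2 := σ.injective hs
    have : i.val / 2 = j.val / 2 := Fin.val_eq_of_eq h2
    exact Fin.ext (by omega)

noncomputable def eAux (n : ℕ) (σ : Equiv.Perm (Fin (n/2))) : Fin n ≃ Fin n :=
  Equiv.ofBijective _ (Finite.injective_iff_bijective.1 (fAux_inj σ))

noncomputable def gAux (n : ℕ) (σ : Equiv.Perm (Fin (n/2))) : SimpleGraph (Fin n) :=
  (pathGraph n).comap ⇑(eAux n σ).symm

lemma gAux_ham (σ : Equiv.Perm (Fin (n/2))) : IsHamPathGraph (gAux n σ) :=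
  ⟨(eAux n σ).symm, fun _ _ => Iff.rfl⟩

lemma gAux_adj_iff (σ : Equiv.Perm (Fin (n/2))) (p q : Fin n) :
    (gAux n σ).Adj (eAux n σ p) (eAux n σ q) ↔ (pathGraph n).Adj p q := by
  simp [gAux, comap_adj]

lemma eAux_even (σ : Equiv.Perm (Fin (n/2))) (t : ℕ) (h : 2*t < n) :
    eAux n σ ⟨2*t, h⟩ = ⟨t, by omega⟩ := by
  simp only [eAux, Equiv.ofBijective_apply, fAux]
  rw [dif_pos (by omega)]
  simp only [show 2*t/2 = t from by omega]

lemma eAux_odd (σ : Equiv.Perm (Fin (n/2))) (t : ℕ) (h : 2*t + 1 < n) :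
    eAux n σ ⟨2*t+1, h⟩ = ⟨(n - n/2) + (σ ⟨t, by omega⟩).val, by
      have := (σ ⟨t, by omega⟩).isLt; omega⟩ := by
  simp only [eAux, Equiv.ofBijective_apply, fAux]
  rw [dif_neg (by omega)]
  simp only [show (2*t+1)/2 = t from by omega]

lemma gAux_key (σ τ : Equiv.Perm (Fin (n/2))) (h : gAux n σ = gAux n τ) (t : Fin (n/2)) :
    σ t = τ t ∨ (∃ u : Fin (n/2), u.val + 1 = t.val ∧ σ t = τ u) := by
  have ht := t.isLt
  have lt0 : 2*t.val < n := by omega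
  have lt0' : 2*t.val + 1 < n := by omega
  have hadj : (gAux n σ).Adj ⟨t.val, by omega⟩
      ⟨(n - n/2) + (σ t).val, by have := (σ t).isLt; omega⟩ := by
    have H := (gAux_adj_iff σ ⟨2*t.val, lt0⟩ ⟨2*t.val+1, lt0'⟩).2
      (by rw [pathGraph_adj]; left; rfl)
    rw [eAux_even, eAux_odd] at H
    simpa only [Fin.eta] using H
  rw [h] at hadj
  set u : Fin (n/2) := τ.symm (σ t) with hu
  have hu1' : 2*u.val + 1 < n := by have := u.isLt; omega
  have h1 : (⟨t.val, by omega⟩ : Fin n) = eAux n τ ⟨2*t.val, lt0⟩ := (eAux_even τ t.val lt0).symm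
  have h2 : (⟨(n - n/2) + (σ t).val, by
        have := (σ t).isLt; omega⟩ : Fin n) = eAux n τ ⟨2*u.val+1, hu1'⟩ := by
    rw [eAux_odd τ u.val hu1']
    apply Fin.ext
    simp only [Fin.eta]
    rw [hu, Equiv.apply_symm_apply]
  rw [h1, h2, gAux_adj_iff, pathGraph_adj] at hadj
  simp only at hadj
  rcases hadj with hc | hc
  · left
    have heq : u = t := Fin.ext (by omega)
    rw [hu] at heq
    calc σ t = τ (τ.symm (σ t)) := (Equiv.apply_symm_apply τ _).symm
    _ = τ t := by rw [heq]
  · right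
    refine ⟨u, by omega, ?_⟩
    rw [hu, Equiv.apply_symm_apply]

lemma gAux_inj : Function.Injective (fun σ : Equiv.Perm (Fin (n/2)) => gAux n σ) := by
  intro σ τ h
  simp only at h
  have main : ∀ k (t : Fin (n/2)), t.val = k → σ t = τ t := by
    intro k
    induction k using Nat.strong_induction_on with
    | _ k ih =>
      intro t hk
      rcases gAux_key σ τ h t with h1 | ⟨u, hu, he⟩
      · exact h1
      · have h2 : σ u = τ u := ih u.val (by omega) u rfl
        have h3 : σ t = σ u := he.trans h2.symm
        have := σ.injective h3
        exfalso; subst this; omega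
  exact Equiv.ext fun t => main t.val t rfl

lemma exists_diff (σ τ : Equiv.Perm (Fin (n/2))) (hst : σ ≠ τ) :
    ∃ t : Fin (n/2), σ t ≠ τ t ∧ 2*t.val + 2 < n := by
  by_contra hc
  push_neg at hc
  apply hst
  apply Equiv.ext
  intro t
  have ht := t.isLt
  by_cases hlt : 2*t.val + 2 < n
  · by_contra hne
    exact absurd (hc t hne) (by omega)
  · set s : Fin (n/2) := τ.symm (σ t) with hs
    by_cases hst' : s = t
    · rw [hs] at hst'
      calc σ t = τ (τ.symm (σ t)) := (Equiv.apply_symm_apply τ _).symm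
      _ = τ t := by rw [hst']
    · exfalso
      have hsv : s.val ≠ t.val := fun h => hst' (Fin.ext h)
      have hs2 : 2*s.val + 2 < n := by have := s.isLt; omega
      have h3 : σ s = τ s := by
        by_contra hne
        exact absurd (hc s hne) (by omega)
      have h4 : τ s = σ t := by rw [hs, Equiv.apply_symm_apply]
      exact hst' (σ.injective (h3.trans h4))

lemma cycle4 {V : Type*} (G : SimpleGraph V) (a b c d : V)
    (hab : G.Adj a b) (hbc : G.Adj b c) (hcd : G.Adj c d) (hda : G.Adj d a)
    (nac : a ≠ c) (nbd : b ≠ d) : ContainsCycleLen G 4 := by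
  have nab := hab.ne
  have nbc := hbc.ne
  have ncd := hcd.ne
  have nda := hda.ne
  refine ⟨a, Walk.cons hab (Walk.cons hbc (Walk.cons hcd (Walk.cons hda Walk.nil))), ?_, rfl⟩
  rw [SimpleGraph.Walk.isCycle_def]
  refine ⟨?_, by simp, ?_⟩
  · rw [SimpleGraph.Walk.isTrail_def]
    simp [Sym2.eq_iff]
    exact ⟨⟨by tauto, by tauto⟩, by tauto⟩
  · simp
    refine ⟨⟨?_, ?_⟩, ?_⟩ <;> tauto

lemma gAux_c4 (σ τ : Equiv.Perm (Fin (n/2))) (hst : σ ≠ τ) :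
    ContainsCycleLen (gAux n σ ⊔ gAux n τ) 4 := by
  obtain ⟨t, hd, hlt⟩ := exists_diff σ τ hst
  have ht := t.isLt
  have hσ := (σ t).isLt
  have hτ := (τ t).isLt
  have hd' : (σ t).val ≠ (τ t).val := fun h => hd (Fin.ext h)
  have lt1 : 2*t.val < n := by omega
  have lt2 : 2*t.val + 1 < n := by omega
  have lt3 : 2*(t.val+1) < n := by omega
  have pa : t.val < n := by omega
  have pb : (n - n/2) + (σ t).val < n := by omega
  have pc : t.val + 1 < n := by omega
  have pd : (n - n/2) + (τ t).val < n := by omega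
  have adjσ1 : (gAux n σ).Adj ⟨t.val, pa⟩ ⟨(n - n/2) + (σ t).val, pb⟩ := by
    have H := (gAux_adj_iff σ ⟨2*t.val, lt1⟩ ⟨2*t.val+1, lt2⟩).2
      (by rw [pathGraph_adj]; left; rfl)
    rw [eAux_even, eAux_odd] at H
    simpa only [Fin.eta] using H
  have adjσ2 : (gAux n σ).Adj ⟨(n - n/2) + (σ t).val, pb⟩ ⟨t.val + 1, pc⟩ := by
    have H := (gAux_adj_iff σ ⟨2*t.val+1, lt2⟩ ⟨2*(t.val+1), lt3⟩).2
      (by rw [pathGraph_adj]; left; simp; omega)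
    rw [eAux_even, eAux_odd] at H
    simpa only [Fin.eta] using H
  have adjτ1 : (gAux n τ).Adj ⟨t.val, pa⟩ ⟨(n - n/2) + (τ t).val, pd⟩ := by
    have H := (gAux_adj_iff τ ⟨2*t.val, lt1⟩ ⟨2*t.val+1, lt2⟩).2
      (by rw [pathGraph_adj]; left; rfl)
    rw [eAux_even, eAux_odd] at H
    simpa only [Fin.eta] using H
  have adjτ2 : (gAux n τ).Adj ⟨(n - n/2) + (τ t).val, pd⟩ ⟨t.val + 1, pc⟩ := by
    have H := (gAux_adj_iff τ ⟨2*t.val+1, lt2⟩ ⟨2*(t.val+1), lt3⟩).2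
      (by rw [pathGraph_adj]; left; simp; omega)
    rw [eAux_even, eAux_odd] at H
    simpa only [Fin.eta] using H
  refine cycle4 _ ⟨t.val, pa⟩ ⟨(n - n/2) + (σ t).val, pb⟩ ⟨t.val + 1, pc⟩
    ⟨(n - n/2) + (τ t).val, pd⟩
    ((sup_adj _ _ _ _).2 (Or.inl adjσ1)) ((sup_adj _ _ _ _).2 (Or.inl adjσ2))
    ((sup_adj _ _ _ _).2 (Or.inr adjτ2.symm)) ((sup_adj _ _ _ _).2 (Or.inr adjτ1.symm))
    (fun h => by have := Fin.val_eq_of_eq h; simp at this)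
    (fun h => by have := Fin.val_eq_of_eq h; simp at this; exact hd' this)

lemma hnum_ge (n : ℕ) : (n/2).factorial ≤ Hnum n 4 := by
  classical
  have hmem : (n/2).factorial ∈ {m | ∃ F : Finset (SimpleGraph (Fin n)), F.card = m ∧
      (∀ G ∈ F, IsHamPathGraph G) ∧
      ∀ G₁ ∈ F, ∀ G₂ ∈ F, G₁ ≠ G₂ → ContainsCycleLen (G₁ ⊔ G₂) 4} := by
    refine ⟨(Finset.univ : Finset (Equiv.Perm (Fin (n/2)))).image (gAux n), ?_, ?_, ?_⟩
    · rw [Finset.card_image_of_injective _ gAux_inj, Finset.card_univ, Fintype.card_perm,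
        Fintype.card_fin]
    · intro G hG
      obtain ⟨σ, _, rfl⟩ := Finset.mem_image.1 hG
      exact gAux_ham σ
    · intro G₁ hG₁ G₂ hG₂ hne
      obtain ⟨σ, _, rfl⟩ := Finset.mem_image.1 hG₁
      obtain ⟨τ, _, rfl⟩ := Finset.mem_image.1 hG₂
      exact gAux_c4 σ τ (fun h => hne (by rw [h]))
  have hbdd : BddAbove {m | ∃ F : Finset (SimpleGraph (Fin n)), F.card = m ∧
      (∀ G ∈ F, IsHamPathGraph G) ∧
      ∀ G₁ ∈ F, ∀ G₂ ∈ F, G₁ ≠ G₂ → ContainsCycleLen (G₁ ⊔ G₂) 4} := by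
    refine ⟨Fintype.card (SimpleGraph (Fin n)), ?_⟩
    rintro k ⟨F, hF, -, -⟩
    exact hF ▸ F.card_le_univ
  exact le_csSup hbdd hmem

lemma pow_le_fact (a r m : ℕ) (h : a + r = m) : (a+1)^r ≤ m.factorial := by
  calc (a+1)^r ≤ a.factorial * (a+1)^r := Nat.le_mul_of_pos_left _ a.factorial_pos
  _ ≤ (a+r).factorial := Nat.factorial_mul_pow_le_factorial
  _ = m.factorial := by rw [h]

lemma step1_aux (ε C L x : ℝ) (hε : 0 < ε) (hε8 : ε ≤ 1/8) (hC0 : 0 ≤ C)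
    (hL0 : 0 ≤ L) (hLn : L ≤ x) (hx0 : 0 < x) (hLC : 2*C + 2 ≤ ε*L) :
    L * ((1/2 - ε) * x) ≤ (L - C) * ((1/2 - ε/2) * x - 1) := by
  have e1 : (C + 1) * x ≤ (ε/2 * L) * x :=
    mul_le_mul_of_nonneg_right (by linarith) hx0.le
  have e2 : (0:ℝ) ≤ C * x := mul_nonneg hC0 hx0.le
  nlinarith [e1, e2]

lemma main_small (ε : ℝ) (hε : 0 < ε) (hε8 : ε ≤ 1/8) :
    ∃ N : ℕ, ∀ n : ℕ, N ≤ n →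
      (n : ℝ) ^ ((1 / 2 - ε) * n) ≤ (((n/2).factorial : ℕ) : ℝ) := by
  set C : ℝ := Real.log (2/ε) with hC
  have hC0 : 0 ≤ C := Real.log_nonneg (by rw [le_div_iff₀ hε]; linarith)
  refine ⟨max (⌈Real.exp ((2*C+2)/ε)⌉₊ + 1) ⌈(8:ℝ)/ε⌉₊, fun n hn => ?_⟩
  have hn8 : (8:ℝ)/ε ≤ n := by
    have := le_trans (le_max_right _ _) hn
    exact_mod_cast (Nat.ceil_le.1 this)
  have hn1 : (1:ℝ) ≤ n := by
    have : (8:ℝ)/ε ≥ 8 := by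
      rw [ge_iff_le, le_div_iff₀ hε]; linarith
    linarith
  have hn0 : (0:ℝ) < n := by linarith
  have hεn : 8 ≤ ε * n := by
    rw [div_le_iff₀ hε] at hn8; linarith [hn8]
  set L : ℝ := Real.log n with hL
  have hL0 : 0 ≤ L := Real.log_nonneg hn1
  have hLn : L ≤ n := (Real.log_le_self hn0.le)
  have hexp : Real.exp ((2*C+2)/ε) ≤ n := by
    have h1 := le_trans (le_max_left _ _) hn
    have h2 : (⌈Real.exp ((2*C+2)/ε)⌉₊ : ℝ) ≤ n := by exact_mod_cast Nat.le_of_succ_le h1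
    exact le_trans (Nat.le_ceil _) h2
  have hLC : 2*C + 2 ≤ ε * L := by
    have := Real.log_le_log (Real.exp_pos _) hexp
    rw [Real.log_exp] at this
    rw [div_le_iff₀ hε] at this
    calc 2*C+2 ≤ L * ε := this
    _ = ε * L := mul_comm _ _
  -- define r and a
  set r : ℕ := ⌊(1/2 - ε/2) * n⌋₊ with hr
  set m : ℕ := n/2 with hm
  have hx0 : (0:ℝ) ≤ (1/2 - ε/2) * n := by
    apply mul_nonneg (by linarith) hn0.le
  have hrub : (r:ℝ) ≤ (1/2 - ε/2) * n := Nat.floor_le hx0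
  have hrlb : (1/2 - ε/2) * n - 1 ≤ (r:ℝ) := by
    have := Nat.lt_floor_add_one ((1/2 - ε/2) * n)
    linarith
  have hm_lb : (n:ℝ)/2 - 1/2 ≤ (m:ℝ) := by
    have h1 : n ≤ 2 * m + 1 := by omega
    have : (n:ℝ) ≤ 2 * (m:ℝ) + 1 := by exact_mod_cast h1
    linarith
  have hrm : r ≤ m := by
    have : (r:ℝ) ≤ (m:ℝ) := by
      calc (r:ℝ) ≤ (1/2 - ε/2) * n := hrub
      _ ≤ (n:ℝ)/2 - 1/2 := by nlinarith
      _ ≤ m := hm_lb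
    exact_mod_cast this
  set a : ℕ := m - r with haa
  have ham : a + r = m := Nat.sub_add_cancel hrm
  have haR : (a:ℝ) = (m:ℝ) - (r:ℝ) := by
    rw [haa, Nat.cast_sub hrm]
  have hA : ε * n / 2 ≤ (a:ℝ) + 1 := by
    rw [haR]; nlinarith
  have hA1 : (1:ℝ) ≤ (a:ℝ) + 1 := by
    have : (0:ℝ) ≤ a := Nat.cast_nonneg a
    linarith
  have hA0 : (0:ℝ) < (a:ℝ) + 1 := by linarith
  -- log bound
  have hlogA : L - C ≤ Real.log ((a:ℝ) + 1) := by
    have h1 : Real.log (ε * n / 2) ≤ Real.log ((a:ℝ)+1) :=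
      Real.log_le_log (by positivity) hA
    have h2 : Real.log (ε * n / 2) = Real.log n - C := by
      rw [hC]
      rw [show ε * n / 2 = n / (2/ε) by field_simp]
      rw [Real.log_div hn0.ne' (by positivity)]
    rw [h2] at h1
    exact h1
  -- main exponent inequality
  have hLC' : 0 ≤ L - C := by nlinarith
  clear_value C L r m a
  have hr0 : (0:ℝ) ≤ r := Nat.cast_nonneg r
  have step1 : L * ((1/2 - ε) * n) ≤ (L - C) * ((1/2 - ε/2) * n - 1) :=
    step1_aux ε C L n hε hε8 hC0 hL0 hLn hn0 hLC
  have step2 : (L - C) * ((1/2 - ε/2) * n - 1) ≤ (L - C) * r :=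
    mul_le_mul_of_nonneg_left hrlb hLC'
  have step3 : (L - C) * (r:ℝ) ≤ Real.log ((a:ℝ)+1) * r :=
    mul_le_mul_of_nonneg_right hlogA hr0
  have key : L * ((1/2 - ε) * n) ≤ Real.log ((a:ℝ)+1) * r := by
    linarith
  -- convert to rpow
  have lhs_eq : (n:ℝ) ^ ((1/2 - ε) * n) = Real.exp (L * ((1/2-ε) * n)) := by
    rw [Real.rpow_def_of_pos hn0, hL]
  have rhs_eq : (((a+1):ℝ)) ^ (r:ℕ) = Real.exp (Real.log ((a:ℝ)+1) * r) := by
    rw [← Real.rpow_natCast ((a:ℝ)+1) r, Real.rpow_def_of_pos hA0]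
  calc (n:ℝ) ^ ((1/2 - ε) * n) = Real.exp (L * ((1/2-ε) * n)) := lhs_eq
  _ ≤ Real.exp (Real.log ((a:ℝ)+1) * r) := Real.exp_le_exp.2 key
  _ = ((a:ℝ)+1) ^ (r:ℕ) := rhs_eq.symm
  _ = (((a+1)^r : ℕ) : ℝ) := by push_cast; ring
  _ ≤ ((m.factorial : ℕ) : ℝ) := by exact_mod_cast pow_le_fact a r m ham


/-- Cohen–Fachini–Körner lower bound: `H(n,4) ≥ n^((1/2)n - o(n))`. -/
theorem stmt_3 :
    ∀ ε : ℝ, 0 < ε → ∃ N : ℕ, ∀ n : ℕ, N ≤ n →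
      (n : ℝ) ^ ((1 / 2 - ε) * n) ≤ (Hnum n 4 : ℝ) := by
  intro ε hε
  have hε' : 0 < min ε (1/8) := lt_min hε (by norm_num)
  obtain ⟨N, hN⟩ := main_small (min ε (1/8)) hε' (min_le_right _ _)
  refine ⟨max N 1, fun n hn => ?_⟩
  have hn1 : (1:ℝ) ≤ n := by exact_mod_cast le_trans (le_max_right _ _) hn
  have h1 : (n:ℝ) ^ ((1/2 - ε) * n) ≤ (n:ℝ) ^ ((1/2 - min ε (1/8)) * n) :=
    Real.rpow_le_rpow_of_exponent_le hn1
      (mul_le_mul_of_nonneg_right (by linarith [min_le_left ε (1/8)]) (Nat.cast_nonneg n))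
  have h2 := hN n (le_trans (le_max_left _ _) hn)
  have h3 : (((n/2).factorial : ℕ) : ℝ) ≤ (Hnum n 4 : ℝ) := by
    exact_mod_cast hnum_ge n
  linarith
end

section
/- For every integer k ≥ 2, H(n,2k) ≥ n^{(1/k)n − o(n)}; precisely, for every ε > 0 there exists N such that for all n ≥ N, H(n,2k) ≥ n^{(1/k − ε)n}. -/
/-!
Split the vertices into `m + 1` spine vertices and `m` blocks of `k - 1` vertices, where
`m = ⌊(n - 1) / k⌋`. Every permutation `σ` of the blocks gives the Hamiltonian path that runs
through spine vertex `0`, block `σ 0`, spine vertex `1`, block `σ 1`, …, spine vertex `m` and then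
the leftover vertices. If `σ i ≠ τ i`, the two paths join spine vertices `i` and `i + 1` by
internally disjoint paths of length `k`, which together form a `2k`-cycle. So the `m!` paths are
pairwise `C_{2k}`-creating, and `log m! ≥ m log m - m = (1/k - o(1)) n log n`.
-/

open SimpleGraph

namespace SimpleGraph.Walk

variable {V : Type*} {G : SimpleGraph V}

def ofSeq (f : ℕ → V) : (l : ℕ) → (∀ t < l, G.Adj (f t) (f (t + 1))) → G.Walk (f 0) (f l)
  | 0, _ => .nil
  | l + 1, h => (ofSeq f l fun t ht => h t (by omega)).concat (h l (by omega))

@[simp]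
lemma length_ofSeq (f : ℕ → V) (l : ℕ) (h : ∀ t < l, G.Adj (f t) (f (t + 1))) :
    (ofSeq f l h).length = l := by
  induction l with
  | zero => rfl
  | succ l ih => simp [ofSeq, ih]

lemma support_ofSeq (f : ℕ → V) (l : ℕ) (h : ∀ t < l, G.Adj (f t) (f (t + 1))) :
    (ofSeq f l h).support = (List.range (l + 1)).map f := by
  induction l with
  | zero => rfl
  | succ l ih =>
    rw [ofSeq, support_concat, ih, List.range_succ (n := l + 1), List.map_append]
    rfl

end SimpleGraph.Walk

section Graphs

variable {V : Type*} {G : SimpleGraph V}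

theorem containsCycleLen_of_injOn {f : ℕ → V} {L : ℕ} (hL : 3 ≤ L)
    (hadj : ∀ t < L, G.Adj (f t) (f (t + 1))) (hclosed : f L = f 0)
    (hinj : Set.InjOn f (Set.Ioc 0 L)) : ContainsCycleLen G L := by
  refine ⟨f 0, (Walk.ofSeq f L hadj).copy rfl hclosed, ?_, by simp⟩
  have hnil : ¬ ((Walk.ofSeq f L hadj).copy rfl hclosed).Nil := by
    rw [← Walk.length_eq_zero_iff, Walk.length_copy, Walk.length_ofSeq]
    omega
  rw [Walk.isCycle_iff_isPath_tail_and_le_length, Walk.isPath_def,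
    Walk.support_tail_of_not_nil _ hnil, Walk.support_copy, Walk.support_ofSeq,
    List.range_succ_eq_map]
  refine ⟨?_, by simpa using hL⟩
  simp only [List.map_cons, List.tail_cons, List.map_map]
  refine List.nodup_range.map_on fun s hs t ht hst => ?_
  rw [List.mem_range] at hs ht
  have := hinj (Set.mem_Ioc.2 ⟨s.succ_pos, hs⟩) (Set.mem_Ioc.2 ⟨t.succ_pos, ht⟩) hst
  omega

theorem containsCycleLen_of_internallyDisjoint {f g : ℕ → V} {l : ℕ} (hl : 2 ≤ l)
    (hf : ∀ t < l, G.Adj (f t) (f (t + 1))) (hg : ∀ t < l, G.Adj (g t) (g (t + 1)))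
    (hstart : f 0 = g 0) (hend : f l = g l)
    (hfinj : Set.InjOn f (Set.Iic l)) (hginj : Set.InjOn g (Set.Iic l))
    (hfg : ∀ t s, 0 < t → t < l → 0 < s → s < l → f t ≠ g s) :
    ContainsCycleLen G (2 * l) := by
  have hfg' : ∀ t s, 0 < t → t ≤ l → s < l → f t ≠ g s := by
    intro t s ht0 htl hsl hts
    rcases Nat.eq_zero_or_pos s with rfl | hs0
    · have := hfinj (Set.mem_Iic.2 htl) (Set.mem_Iic.2 l.zero_le) (hts.trans hstart.symm)
      omega
    rcases htl.lt_or_eq with htl | rfl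
    · exact hfg t s ht0 htl hs0 hsl hts
    · have := hginj (Set.mem_Iic.2 le_rfl) (Set.mem_Iic.2 hsl.le) (hend.symm.trans hts)
      omega
  let c : ℕ → V := fun t => if t ≤ l then f t else g (2 * l - t)
  apply containsCycleLen_of_injOn (f := c) (by omega)
  · intro t ht
    simp only [c]
    rcases Nat.lt_or_ge t l with htl | htl
    · rw [if_pos htl.le, if_pos (Nat.succ_le_of_lt htl)]
      exact hf t htl
    · have hg' := (hg (2 * l - (t + 1)) (by omega)).symm
      rw [show 2 * l - (t + 1) + 1 = 2 * l - t by omega] at hg'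
      rw [if_neg (show ¬ t + 1 ≤ l by omega)]
      split_ifs with h
      · obtain rfl : t = l := by omega
        rwa [hend, show 2 * t - t = t by omega] at *
      · exact hg'
  · simp only [c]
    rw [if_neg (by omega), if_pos l.zero_le, Nat.sub_self, hstart]
  · intro t1 ht1 t2 ht2 h
    rw [Set.mem_Ioc] at ht1 ht2
    simp only [c] at h
    split_ifs at h with h1 h2 h2
    · exact hfinj h1 h2 h
    · exact absurd h (hfg' _ _ ht1.1 h1 (by omega))
    · exact absurd h.symm (hfg' _ _ ht2.1 h2 (by omega))
    · have := hginj (Set.mem_Iic.2 (by omega)) (Set.mem_Iic.2 (by omega)) h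
      omega

theorem Equiv.eq_of_comap_pathGraph_eq {n : ℕ} {e₁ e₂ : Fin n ≃ V}
    (h : (pathGraph n).comap e₁.symm = (pathGraph n).comap e₂.symm)
    (h0 : ∀ p : Fin n, (p : ℕ) = 0 → e₁ p = e₂ p) : e₁ = e₂ := by
  suffices ∀ j (p : Fin n), (p : ℕ) = j → e₁ p = e₂ p from Equiv.ext fun p => this p p rfl
  intro j
  induction j using Nat.strong_induction_on with | _ j ih => ?_
  intro p hp
  rcases j with _ | j
  · exact h0 p hp
  -- The `e₂`-position `r` of `e₁ p` is next to `q`; it cannot be `j - 1`, where both paths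
  -- already agree.
  let q : Fin n := ⟨j, by omega⟩
  have hq : e₁ q = e₂ q := ih j (by omega) q rfl
  set r := e₂.symm (e₁ p) with hr
  have hadj : (pathGraph n).Adj q r := by
    have : ((pathGraph n).comap e₁.symm).Adj (e₁ q) (e₁ p) := by
      simp [pathGraph_adj, q, hp]
    rwa [h, hq, comap_adj, Equiv.symm_apply_apply] at this
  rcases pathGraph_adj.1 hadj with hqr | hrq
  · change j + 1 = (r : ℕ) at hqr
    rw [← Equiv.apply_symm_apply e₂ (e₁ p), ← hr, show r = p from Fin.ext (by omega)]
  · change (r : ℕ) + 1 = j at hrq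
    have := ih r (by omega) r rfl
    rw [hr, Equiv.apply_symm_apply] at this
    have := congrArg Fin.val (e₁.injective this)
    omega

end Graphs

section BlockPaths

open Equiv Function

variable {k m n : ℕ}

lemma Equiv.Perm.extendDomain_finEquivSubtype_of_lt (σ : Perm (Fin m)) {i : ℕ} (hi : i < m) :
    σ.extendDomain Fin.equivSubtype i = σ ⟨i, hi⟩ := by
  rw [Perm.extendDomain_apply_subtype σ Fin.equivSubtype hi]
  rfl

lemma Equiv.Perm.extendDomain_finEquivSubtype_lt_iff (σ : Perm (Fin m)) {i : ℕ} :
    σ.extendDomain Fin.equivSubtype i < m ↔ i < m := by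
  by_cases hi : i < m
  · simp [σ.extendDomain_finEquivSubtype_of_lt hi, hi]
  · rw [Perm.extendDomain_apply_not_subtype σ Fin.equivSubtype hi]

/-- The vertex at position `p` of the path of `σ`. The spine vertices are the multiples `k * i`,
`i ≤ m`, and block `b < m` consists of the vertices `k * b + r` with `0 < r < k`; so the path
visits `k * i`, then block `σ i` in increasing order, then `k * (i + 1)`, …, and after position
`m * k` it visits the remaining vertices in increasing order. -/
def blockMap (k : ℕ) (σ : Perm (Fin m)) (p : ℕ) : ℕ :=
  if p % k = 0 then p else k * σ.extendDomain Fin.equivSubtype (p / k) + p % k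

lemma blockMap_of_mod_eq_zero (σ : Perm (Fin m)) {p : ℕ} (hp : p % k = 0) :
    blockMap k σ p = p :=
  if_pos hp

lemma blockMap_mod (σ : Perm (Fin m)) (p : ℕ) : blockMap k σ p % k = p % k := by
  unfold blockMap
  split_ifs
  · rfl
  · rw [Nat.mul_add_mod, Nat.mod_mod]

lemma blockMap_mul_add (σ : Perm (Fin m)) (i : Fin m) {r : ℕ} (hr : 0 < r) (hrk : r < k) :
    blockMap k σ (k * i + r) = k * σ i + r := by
  have hmod : (k * i + r) % k = r := by rw [Nat.mul_add_mod, Nat.mod_eq_of_lt hrk]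
  have hdiv : (k * i + r) / k = i := by
    rw [Nat.mul_add_div (by omega), Nat.div_eq_of_lt hrk, add_zero]
  rw [blockMap, if_neg (by omega), hmod, hdiv, σ.extendDomain_finEquivSubtype_of_lt i.isLt]

lemma blockMap_lt (σ : Perm (Fin m)) (hmn : m * k ≤ n) {p : ℕ} (hp : p < n) :
    blockMap k σ p < n := by
  rcases Nat.eq_zero_or_pos k with rfl | hk
  · simpa [blockMap] using hp
  unfold blockMap
  split_ifs with h0
  · exact hp
  set b := σ.extendDomain Fin.equivSubtype (p / k)
  have hpk : p % k < k := Nat.mod_lt _ hk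
  by_cases hb : p / k < m
  · have : k * (b + 1) ≤ k * m :=
      Nat.mul_le_mul_left k (σ.extendDomain_finEquivSubtype_lt_iff.2 hb)
    rw [mul_add, mul_one, mul_comm k m] at this
    omega
  · rw [show b = p / k from Perm.extendDomain_apply_not_subtype σ Fin.equivSubtype hb,
      Nat.div_add_mod]
    exact hp

lemma blockMap_injective (σ : Perm (Fin m)) : Injective (blockMap k σ) := by
  intro p q h
  have hmod : p % k = q % k := by rw [← blockMap_mod σ p, h, blockMap_mod]
  rcases Nat.eq_zero_or_pos k with rfl | hk
  · simpa using hmod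
  by_cases hp : p % k = 0
  · rwa [blockMap_of_mod_eq_zero σ hp, blockMap_of_mod_eq_zero σ (hmod ▸ hp)] at h
  rw [blockMap, blockMap, if_neg hp, if_neg (hmod ▸ hp), hmod, Nat.add_right_cancel_iff] at h
  have hdiv : p / k = q / k :=
    (σ.extendDomain Fin.equivSubtype).injective (Nat.eq_of_mul_eq_mul_left hk h)
  rw [← Nat.div_add_mod p k, ← Nat.div_add_mod q k, hdiv, hmod]

noncomputable def blockPerm (hmn : m * k ≤ n) (σ : Perm (Fin m)) : Perm (Fin n) :=
  Equiv.ofBijective (fun p => ⟨blockMap k σ p, blockMap_lt σ hmn p.isLt⟩)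
    (Finite.injective_iff_bijective.1 fun _ _ h =>
      Fin.ext (blockMap_injective σ (congrArg Fin.val h)))

@[simp]
lemma val_blockPerm (hmn : m * k ≤ n) (σ : Perm (Fin m)) (p : Fin n) :
    (blockPerm hmn σ p : ℕ) = blockMap k σ p :=
  rfl

noncomputable def hamPathGraph (hmn : m * k ≤ n) (σ : Perm (Fin m)) : SimpleGraph (Fin n) :=
  (pathGraph n).comap (blockPerm hmn σ).symm

lemma isHamPathGraph_hamPathGraph (hmn : m * k ≤ n) (σ : Perm (Fin m)) :
    IsHamPathGraph (hamPathGraph hmn σ) :=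
  ⟨(blockPerm hmn σ).symm, fun _ _ => Iff.rfl⟩

lemma hamPathGraph_adj_blockPerm (hmn : m * k ≤ n) (σ : Perm (Fin m)) {p q : Fin n} :
    (hamPathGraph hmn σ).Adj (blockPerm hmn σ p) (blockPerm hmn σ q) ↔ (pathGraph n).Adj p q := by
  simp [hamPathGraph]

lemma mul_val_add_le (i : Fin m) {r : ℕ} (hr : r ≤ k) : k * i + r ≤ m * k := by
  have := Nat.mul_le_mul_left k i.isLt
  rw [Nat.mul_succ, mul_comm k m] at this
  omega

theorem hamPathGraph_injective (hk : 2 ≤ k) (hmn : m * k ≤ n) :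
    Injective (hamPathGraph (n := n) hmn) := by
  intro σ τ h
  have hperm : blockPerm hmn σ = blockPerm hmn τ :=
    Equiv.eq_of_comap_pathGraph_eq h fun p hp => Fin.ext (by
      rw [val_blockPerm, val_blockPerm, hp, blockMap_of_mod_eq_zero σ (Nat.zero_mod k),
        blockMap_of_mod_eq_zero τ (Nat.zero_mod k)])
  ext i
  have hpos : k * i + 1 < n := by have := mul_val_add_le i (le_refl k); omega
  have := congrArg (fun e => (e ⟨k * i + 1, hpos⟩ : ℕ)) hperm
  simp only [val_blockPerm, blockMap_mul_add _ i one_pos hk] at this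
  exact Nat.eq_of_mul_eq_mul_left (by omega) (Nat.add_right_cancel this)

theorem containsCycleLen_hamPathGraph_sup (hk : 2 ≤ k) (hmn : m * k < n)
    {σ τ : Perm (Fin m)} (hστ : σ ≠ τ) :
    ContainsCycleLen (hamPathGraph hmn.le σ ⊔ hamPathGraph hmn.le τ) (2 * k) := by
  obtain ⟨i, hi⟩ : ∃ i, σ i ≠ τ i := not_forall.1 fun h => hστ (Equiv.ext h)
  have : NeZero n := ⟨by omega⟩
  have hin : k * i + k < n := (mul_val_add_le i le_rfl).trans_lt hmn
  let seg (ρ : Perm (Fin m)) (t : ℕ) : Fin n := blockPerm hmn.le ρ (Fin.ofNat n (k * i + t))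
  have hseg (ρ : Perm (Fin m)) {t : ℕ} (ht : t ≤ k) :
      (seg ρ t : ℕ) = blockMap k ρ (k * i + t) := by
    rw [val_blockPerm, Fin.val_ofNat, Nat.mod_eq_of_lt (by omega)]
  have hadj (ρ : Perm (Fin m)) :
      ∀ t < k, (hamPathGraph hmn.le ρ).Adj (seg ρ t) (seg ρ (t + 1)) := by
    intro t ht
    rw [hamPathGraph_adj_blockPerm, pathGraph_adj, Fin.val_ofNat, Fin.val_ofNat,
      Nat.mod_eq_of_lt (by omega), Nat.mod_eq_of_lt (by omega)]
    omega
  have hinj (ρ : Perm (Fin m)) : Set.InjOn (seg ρ) (Set.Iic k) := by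
    intro t ht s hs h
    have := blockMap_injective ρ
      ((hseg ρ ht).symm.trans ((congrArg Fin.val h).trans (hseg ρ hs)))
    omega
  have hspine {j : ℕ} (hj : j ≤ k) (hjk : (k * i + j) % k = 0) : seg σ j = seg τ j :=
    Fin.ext (by rw [hseg σ hj, hseg τ hj, blockMap_of_mod_eq_zero σ hjk,
      blockMap_of_mod_eq_zero τ hjk])
  refine containsCycleLen_of_internallyDisjoint hk (fun t ht => Or.inl (hadj σ t ht))
    (fun t ht => Or.inr (hadj τ t ht)) (hspine k.zero_le (by simp))
    (hspine le_rfl (by simp)) (hinj σ) (hinj τ) ?_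
  intro t s ht htk hs hsk h
  have hval := congrArg Fin.val h
  rw [hseg σ htk.le, hseg τ hsk.le, blockMap_mul_add σ i ht htk,
    blockMap_mul_add τ i hs hsk] at hval
  obtain rfl : t = s := by
    simpa [Nat.mul_add_mod, Nat.mod_eq_of_lt htk, Nat.mod_eq_of_lt hsk] using
      congrArg (· % k) hval
  exact hi (Fin.ext (Nat.eq_of_mul_eq_mul_left (by omega) (Nat.add_right_cancel hval)))

end BlockPaths

theorem card_le_Hnum {n L : ℕ} {F : Finset (SimpleGraph (Fin n))}
    (hF : ∀ G ∈ F, IsHamPathGraph G)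
    (hC : ∀ G₁ ∈ F, ∀ G₂ ∈ F, G₁ ≠ G₂ → ContainsCycleLen (G₁ ⊔ G₂) L) :
    F.card ≤ Hnum n L :=
  le_csSup ⟨Fintype.card (SimpleGraph (Fin n)), by
    rintro _ ⟨F', rfl, -⟩
    exact F'.card_le_univ⟩ ⟨F, rfl, hF, hC⟩

theorem factorial_le_Hnum {k m n : ℕ} (hk : 2 ≤ k) (hmn : m * k < n) :
    m.factorial ≤ Hnum n (2 * k) := by
  classical
  have := card_le_Hnum (F := Finset.univ.image (hamPathGraph hmn.le)) (L := 2 * k)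
    (by simp [isHamPathGraph_hamPathGraph]) (by
      simp only [Finset.mem_image, Finset.mem_univ, true_and]
      rintro _ ⟨σ, rfl⟩ _ ⟨τ, rfl⟩ hne
      exact containsCycleLen_hamPathGraph_sup hk hmn (ne_of_apply_ne _ hne))
  rwa [Finset.card_image_of_injective _ (hamPathGraph_injective hk hmn.le), Finset.card_univ,
    Fintype.card_perm, Fintype.card_fin] at this

section Asymptotics

open Real Filter

theorem mul_log_sub_le_log_factorial (m : ℕ) : m * log m - m ≤ log (m.factorial : ℝ) := by
  rcases Nat.eq_zero_or_pos m with rfl | hm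
  · simp
  have h2π : 0 ≤ log (2 * π) := log_nonneg (by nlinarith [pi_gt_three])
  have := Stirling.le_log_factorial_stirling hm.ne'
  have := log_nonneg (Nat.one_le_cast.2 hm : (1 : ℝ) ≤ m)
  linarith

theorem eventually_mul_log_le_log_factorial {k : ℕ} (hk : 0 < k) {ε : ℝ} (hε : 0 < ε) :
    ∀ᶠ n : ℕ in atTop, (1 / k - ε) * n * log n ≤ log (((n - 1) / k).factorial : ℝ) := by
  have hk' : (0 : ℝ) < k := Nat.cast_pos.2 hk
  set δ := min (ε * k / 2) (1 / 2)
  have hδ0 : 0 < δ := lt_min (by positivity) one_half_pos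
  have hδ1 : δ ≤ 1 / 2 := min_le_right _ _
  have hδε : 2 * δ ≤ ε * k := by linarith [min_le_left (ε * k / 2) (1 / 2)]
  have hcoef : 1 / k - ε ≤ (1 - δ) ^ 2 / k := by
    rw [div_sub' hk'.ne', div_le_div_iff_of_pos_right hk']
    nlinarith
  -- For such `n`, `m ≥ (1 - δ) n / k` and `log m - 1 ≥ (1 - δ) log n`.
  filter_upwards [tendsto_natCast_atTop_atTop.eventually_ge_atTop (k / δ),
    (tendsto_log_atTop.comp tendsto_natCast_atTop_atTop).eventually_ge_atTop
      ((log (k / (1 - δ)) + 1) / δ)] with n hn hlog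
  rw [Function.comp_apply, div_le_iff₀ hδ0] at hlog
  rw [div_le_iff₀ hδ0] at hn
  have hδ' : 0 < 1 - δ := by linarith
  have hkm : (n : ℝ) ≤ k * ((n - 1) / k : ℕ) + k := by
    have := Nat.lt_mul_div_succ (n - 1) hk
    exact_mod_cast (show n ≤ k * ((n - 1) / k) + k by rw [Nat.mul_succ] at this; omega)
  set m := (n - 1) / k
  have hn1 : (1 : ℝ) ≤ n := by nlinarith [(Nat.one_le_cast.2 hk : (1 : ℝ) ≤ k)]
  have hlogn : 0 ≤ log n := log_nonneg hn1
  set y := (1 - δ) * n / k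
  have hy0 : 0 < y := by positivity
  have hym : y ≤ m := by
    rw [div_le_iff₀ hk']
    nlinarith
  have hlogy : (1 - δ) * log n + 1 ≤ log y := by
    rw [show y = n / (k / (1 - δ)) by rw [div_div_eq_mul_div]; ring,
      log_div (by positivity) (by positivity)]
    linarith
  calc (1 / k - ε) * n * log n ≤ (1 - δ) ^ 2 / k * n * log n := by gcongr
    _ = y * ((1 - δ) * log n) := by ring
    _ ≤ m * (log m - 1) := by
        gcongr
        linarith [log_le_log hy0 hym]
    _ ≤ log (m.factorial : ℝ) := by linarith [mul_log_sub_le_log_factorial m]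

theorem eventually_rpow_le_factorial {k : ℕ} (hk : 0 < k) {ε : ℝ} (hε : 0 < ε) :
    ∀ᶠ n : ℕ in atTop, (n : ℝ) ^ ((1 / k - ε) * n) ≤ ((n - 1) / k).factorial := by
  filter_upwards [eventually_mul_log_le_log_factorial hk hε, eventually_gt_atTop 0] with n hlog hn
  rw [rpow_le_iff_le_log (by positivity) (by positivity)]
  exact hlog

end Asymptotics

/-- Lower bound: `H(n,2k) ≥ n^((1/k)n - o(n))` for every `k ≥ 2`. -/
theorem stmt_8 (k : ℕ) (hk : 2 ≤ k) :
    ∀ ε : ℝ, 0 < ε → ∃ N : ℕ, ∀ n : ℕ, N ≤ n →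
      (n : ℝ) ^ ((1 / (k : ℝ) - ε) * n) ≤ (Hnum n (2 * k) : ℝ) := by
  intro ε hε
  obtain ⟨N, hN⟩ := Filter.eventually_atTop.1
    ((eventually_rpow_le_factorial (by omega : 0 < k) hε).and (Filter.eventually_gt_atTop 0))
  refine ⟨N, fun n hn => (hN n hn).1.trans ?_⟩
  have hmn : (n - 1) / k * k < n :=
    (Nat.div_mul_le_self _ _).trans_lt (Nat.sub_lt (hN n hn).2 one_pos)
  exact_mod_cast factorial_le_Hnum hk hmn
end

section
/- For every integer k ≥ 2 and every even integer n ≥ 4, M(n,2k) ≤ (n − 1) · M(n − 2, 2k). -/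
open SimpleGraph

/-!
Every perfect matching of `K_n` matches the vertex `0` to one of the `n - 1` other vertices `j`.
Deleting `0` and `j` from the matchings that contain the edge `0j` gives, injectively, perfect
matchings of `K_{n-2}`, and they stay pairwise `C_ℓ`-creating: in the union of two such matchings
the vertices `0` and `j` have `j` resp. `0` as their only neighbour, so no cycle passes through
them. Hence each of the `n - 1` classes has at most `M(n-2, ℓ)` members.
-/

open Finset

variable {V W : Type*}

lemma SimpleGraph.Walk.IsCycle.neighborSet_nontrivial [DecidableEq V] {G : SimpleGraph V}
    {u x : V} {w : G.Walk u u} (hw : w.IsCycle) (hx : x ∈ w.support) :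
    (G.neighborSet x).Nontrivial := by
  have hw' := hw.rotate hx
  exact ⟨_, (w.rotate x hx).adj_snd hw'.not_nil, _,
    ((w.rotate x hx).adj_penultimate hw'.not_nil).symm, hw'.snd_ne_penultimate⟩

lemma ContainsCycleLen.map {G : SimpleGraph V} {H : SimpleGraph W} (φ : G ↪g H) {ℓ : ℕ}
    (h : ContainsCycleLen G ℓ) : ContainsCycleLen H ℓ := by
  obtain ⟨u, w, hw, rfl⟩ := h
  exact ⟨φ u, w.map φ.toHom, hw.map φ.injective, w.length_map _⟩

lemma ContainsCycleLen.induce {G : SimpleGraph V} {s : Set V} {ℓ : ℕ}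
    (hs : ∀ x ∉ s, (G.neighborSet x).Subsingleton) (h : ContainsCycleLen G ℓ) :
    ContainsCycleLen (G.induce s) ℓ := by
  classical
  obtain ⟨u, w, hw, rfl⟩ := h
  have hsupp : ∀ x ∈ w.support, x ∈ s := fun x hx =>
    by_contra fun hxs => (hw.neighborSet_nontrivial hx).not_subsingleton (hs x hxs)
  have hmap := w.map_induce hsupp
  refine ⟨_, w.induce s hsupp, ?_, ?_⟩
  · rw [← hmap] at hw
    exact (Walk.isCycle_map_iff_of_injective (Embedding.induce (G := G) s).injective).mp hw
  · rw [← Walk.length_map (Embedding.induce s).toHom, hmap]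
    rfl

lemma ContainsCycleLen.comap (f : V ↪ W) {G : SimpleGraph W} {ℓ : ℕ}
    (hf : ∀ x ∉ Set.range f, (G.neighborSet x).Subsingleton) (h : ContainsCycleLen G ℓ) :
    ContainsCycleLen (G.comap f) ℓ :=
  (h.induce hf).map (Embedding.comap f G).isoInduceRange.symm.toEmbedding

namespace IsPMGraph

variable {G : SimpleGraph W} (hG : IsPMGraph G)
include hG

lemma eq_of_adj {v w₁ w₂ : W} (h₁ : G.Adj v w₁) (h₂ : G.Adj v w₂) : w₁ = w₂ :=
  (hG v).unique h₁ h₂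

lemma neighborSet_eq_singleton {v w : W} (h : G.Adj v w) : G.neighborSet v = {w} :=
  Set.eq_singleton_iff_unique_mem.mpr ⟨h, fun _ h' => hG.eq_of_adj h' h⟩

lemma notMem_pair_of_adj {z j v w : W} (hzj : G.Adj z j) (hvw : G.Adj v w)
    (hv : v ∉ ({z, j} : Set W)) : w ∉ ({z, j} : Set W) := by
  rintro (rfl | rfl)
  · exact hv (Or.inr (hG.eq_of_adj hvw.symm hzj))
  · exact hv (Or.inl (hG.eq_of_adj hvw.symm hzj.symm))

variable {f : V ↪ W} {z j : W} (hzj : G.Adj z j) (hf : Set.range f = {z, j}ᶜ)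
include hzj hf

lemma comap : IsPMGraph (G.comap f) := by
  intro a
  obtain ⟨w, hw, huniq⟩ := hG (f a)
  have hfa : f a ∉ ({z, j} : Set W) := by
    rw [← Set.mem_compl_iff, ← hf]
    exact Set.mem_range_self a
  obtain ⟨b, rfl⟩ : w ∈ Set.range f := by
    rw [hf]
    exact hG.notMem_pair_of_adj hzj hw hfa
  exact ⟨b, hw, fun b' hb' => f.injective (huniq _ hb')⟩

lemma eq_edge_sup_map_comap : G = edge z j ⊔ (G.comap f).map f := by
  refine le_antisymm (fun v w hvw => ?_)
    (sup_le ((edge_le_iff _).mpr (Or.inr hzj)) (map_comap_le f G))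
  by_cases hv : v ∈ ({z, j} : Set W)
  · left
    rw [edge_adj]
    refine ⟨?_, hvw.ne⟩
    rcases hv with rfl | rfl
    · exact Or.inl ⟨rfl, hG.eq_of_adj hvw hzj⟩
    · exact Or.inr ⟨rfl, hG.eq_of_adj hvw hzj.symm⟩
  · right
    have hw := hG.notMem_pair_of_adj hzj hvw hv
    rw [← Set.mem_compl_iff, ← hf] at hv hw
    obtain ⟨a, rfl⟩ := hv
    obtain ⟨b, rfl⟩ := hw
    exact (map_adj_apply (f := f)).mpr hvw

end IsPMGraph

lemma injOn_comap_of_adj {f : V ↪ W} {z j : W} (hf : Set.range f = {z, j}ᶜ) :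
    Set.InjOn (SimpleGraph.comap f) {G | IsPMGraph G ∧ G.Adj z j} := by
  rintro G₁ ⟨hG₁, h₁⟩ G₂ ⟨hG₂, h₂⟩ h
  rw [hG₁.eq_edge_sup_map_comap h₁ hf, hG₂.eq_edge_sup_map_comap h₂ hf]
  exact congrArg (edge z j ⊔ ·.map f) h

lemma sup_neighborSet_subsingleton_of_adj {G₁ G₂ : SimpleGraph W} (hG₁ : IsPMGraph G₁)
    (hG₂ : IsPMGraph G₂) {z j : W} (h₁ : G₁.Adj z j) (h₂ : G₂.Adj z j) :
    ∀ x ∈ ({z, j} : Set W), ((G₁ ⊔ G₂).neighborSet x).Subsingleton := by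
  rintro x (rfl | rfl)
  · rw [neighborSet_sup, hG₁.neighborSet_eq_singleton h₁, hG₂.neighborSet_eq_singleton h₂,
      Set.union_self]
    exact Set.subsingleton_singleton
  · rw [neighborSet_sup, hG₁.neighborSet_eq_singleton h₁.symm,
      hG₂.neighborSet_eq_singleton h₂.symm, Set.union_self]
    exact Set.subsingleton_singleton

/-- The families over which `Mnum` is the supremum. -/
def IsCreatingPMFamily (F : Finset (SimpleGraph V)) (ℓ : ℕ) : Prop :=
  (∀ G ∈ F, IsPMGraph G) ∧ ∀ G₁ ∈ F, ∀ G₂ ∈ F, G₁ ≠ G₂ → ContainsCycleLen (G₁ ⊔ G₂) ℓ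

namespace IsCreatingPMFamily

variable {F : Finset (SimpleGraph W)} {ℓ : ℕ}

lemma mono (hF : IsCreatingPMFamily F ℓ) {F' : Finset (SimpleGraph W)} (h : F' ⊆ F) :
    IsCreatingPMFamily F' ℓ :=
  ⟨fun G hG => hF.1 G (h hG), fun G₁ h₁ G₂ h₂ => hF.2 G₁ (h h₁) G₂ (h h₂)⟩

variable {f : V ↪ W} {z j : W} (hf : Set.range f = {z, j}ᶜ) (hzj : ∀ G ∈ F, G.Adj z j)
include hf hzj

lemma card_image_comap [DecidableEq (SimpleGraph V)] (hF : IsCreatingPMFamily F ℓ) :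
    (F.image (SimpleGraph.comap f)).card = F.card :=
  card_image_of_injOn fun _ h₁ _ h₂ =>
    injOn_comap_of_adj hf ⟨hF.1 _ h₁, hzj _ h₁⟩ ⟨hF.1 _ h₂, hzj _ h₂⟩

lemma image_comap [DecidableEq (SimpleGraph V)] (hF : IsCreatingPMFamily F ℓ) :
    IsCreatingPMFamily (F.image (SimpleGraph.comap f)) ℓ := by
  refine ⟨?_, ?_⟩
  · simp only [mem_image]
    rintro _ ⟨G, hG, rfl⟩
    exact (hF.1 G hG).comap (hzj G hG) hf
  · simp only [mem_image]
    rintro _ ⟨G₁, h₁, rfl⟩ _ ⟨G₂, h₂, rfl⟩ hne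
    refine (hF.2 G₁ h₁ G₂ h₂ fun h => hne (h ▸ rfl)).comap f fun x hx => ?_
    rw [hf, Set.notMem_compl_iff] at hx
    exact sup_neighborSet_subsingleton_of_adj (hF.1 G₁ h₁) (hF.1 G₂ h₂) (hzj G₁ h₁) (hzj G₂ h₂)
      x hx

end IsCreatingPMFamily

lemma card_le_Mnum {m ℓ : ℕ} {F : Finset (SimpleGraph (Fin m))} (hF : IsCreatingPMFamily F ℓ) :
    F.card ≤ Mnum m ℓ :=
  le_csSup ⟨Fintype.card (SimpleGraph (Fin m)), by rintro _ ⟨F, rfl, -⟩; exact F.card_le_univ⟩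
    ⟨F, rfl, hF⟩

lemma Mnum_le {n ℓ b : ℕ}
    (h : ∀ F : Finset (SimpleGraph (Fin n)), IsCreatingPMFamily F ℓ → F.card ≤ b) :
    Mnum n ℓ ≤ b :=
  csSup_le' (by rintro _ ⟨F, rfl, hF⟩; exact h F hF)

lemma card_le_Mnum_sub_two_of_adj {n ℓ : ℕ}
    {F : Finset (SimpleGraph (Fin n))} (hF : IsCreatingPMFamily F ℓ) {z j : Fin n} (hzj : z ≠ j)
    (hadj : ∀ G ∈ F, G.Adj z j) : F.card ≤ Mnum (n - 2) ℓ := by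
  classical
  have hcard : ({z, j}ᶜ : Finset (Fin n)).card = n - 2 := by
    rw [card_compl, card_pair hzj, Fintype.card_fin]
  let f := (({z, j}ᶜ : Finset (Fin n)).orderEmbOfFin hcard).toEmbedding
  have hf : Set.range f = {z, j}ᶜ := by
    simp only [f, RelEmbedding.coe_toEmbedding, range_orderEmbOfFin, coe_compl, coe_pair]
  rw [← hF.card_image_comap hf hadj]
  exact card_le_Mnum (hF.image_comap hf hadj)

theorem stmt_10_general (k n : ℕ) (hn : 4 ≤ n) :
    Mnum n (2 * k) ≤ (n - 1) * Mnum (n - 2) (2 * k) := by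
  classical
  refine Mnum_le fun F hF => ?_
  let z : Fin n := ⟨0, by omega⟩
  have hcover : F ⊆ (univ.erase z).biUnion fun j => F.filter (·.Adj z j) := by
    intro G hG
    obtain ⟨j, hj, -⟩ := hF.1 G hG z
    exact mem_biUnion.mpr ⟨j, mem_erase.mpr ⟨hj.ne', mem_univ j⟩, mem_filter.mpr ⟨hG, hj⟩⟩
  calc F.card ≤ (univ.erase z).card * Mnum (n - 2) (2 * k) :=
        (card_le_card hcover).trans <| card_biUnion_le_card_mul _ _ _ fun j hj =>
          card_le_Mnum_sub_two_of_adj (hF.mono (filter_subset _ F)) (mem_erase.mp hj).1.symm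
            fun _ hG => (mem_filter.mp hG).2
    _ = (n - 1) * Mnum (n - 2) (2 * k) := by
        rw [card_erase_of_mem (mem_univ z), card_univ, Fintype.card_fin]

/-- `M(n,2k) ≤ (n-1) M(n-2, 2k)` for every `k ≥ 2` and even `n ≥ 4`. -/
theorem stmt_10 (k n : ℕ) (hk : 2 ≤ k) (hn : 4 ≤ n) (hne : Even n) :
    Mnum n (2 * k) ≤ (n - 1) * Mnum (n - 2) (2 * k) :=
  stmt_10_general k n hn
end

section
/- For every finite vertex-transitive simple graph G, the product of the independence number and the clique number of G is at most the number of vertices of G: α(G)·ω(G) ≤ |V(G)|. -/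
/-!
An automorphism of `G` maps at most one vertex of a clique `K` into an independent set `S`,
since it preserves adjacency. Count the triples `(k, s, g)` with `k ∈ K`, `s ∈ S` and `g k = s`:
by transitivity each pair `(k, s)` is matched by exactly `|Aut G| / |V|` automorphisms, while
each automorphism occurs in at most one triple, so `|K| |S| |Aut G| / |V| ≤ |Aut G|`.
-/

open SimpleGraph

/-- The independence number of a graph: the maximum size of a set of
pairwise non-adjacent vertices. -/
noncomputable def indepNum' {V : Type*} (G : SimpleGraph V) : ℕ :=
  sSup {m | ∃ s : Finset V, s.card = m ∧ ∀ a ∈ s, ∀ b ∈ s, a ≠ b → ¬G.Adj a b}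

open Finset

namespace MulAction

variable {Γ α : Type*} [Group Γ] [MulAction Γ α] [IsPretransitive Γ α]

theorem natCard_transporter_mul_natCard (a b : α) :
    Nat.card {g : Γ // g • a = b} * Nat.card α = Nat.card Γ := by
  obtain ⟨h, rfl⟩ := exists_smul_eq Γ a b
  have e : {g : Γ // g • a = h • a} ≃ stabilizer Γ a :=
    (Equiv.mulLeft h⁻¹).subtypeEquiv fun g => by simp [mul_smul, inv_smul_eq_iff]
  rw [Nat.card_congr e, ← index_stabilizer_of_transitive Γ a, Subgroup.card_mul_index]

theorem card_mul_card_le_card_of_forall_smul_mem [Fintype Γ] [Fintype α] {A B : Finset α}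
    (hAB : ∀ g : Γ, ∀ a ∈ A, ∀ a' ∈ A, g • a ∈ B → g • a' ∈ B → a = a') :
    #A * #B ≤ Fintype.card α := by
  classical
  have hfiber : ∀ p : α × α, #{g : Γ | g • p.1 = p.2} * Fintype.card α = Fintype.card Γ :=
    fun p => by
      simpa only [Nat.card_eq_fintype_card, Fintype.card_subtype]
        using natCard_transporter_mul_natCard (Γ := Γ) p.1 p.2
  have hsub : ∀ g : Γ, #{p ∈ A ×ˢ B | g • p.1 = p.2} ≤ 1 := by
    refine fun g => card_le_one.2 fun p hp q hq => ?_
    simp only [mem_filter, mem_product] at hp hq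
    have hpq := hAB g p.1 hp.1.1 q.1 hq.1.1 (hp.2 ▸ hp.1.2) (hq.2 ▸ hq.1.2)
    exact Prod.ext hpq (hp.2.symm.trans (hpq ▸ hq.2))
  refine Nat.le_of_mul_le_mul_right ?_ (Fintype.card_pos (α := Γ))
  calc #A * #B * Fintype.card Γ
      = ∑ p ∈ A ×ˢ B, #{g : Γ | g • p.1 = p.2} * Fintype.card α := by
        simp only [hfiber, sum_const, card_product, smul_eq_mul]
    _ = (∑ g : Γ, #{p ∈ A ×ˢ B | g • p.1 = p.2}) * Fintype.card α := by
        rw [← sum_mul]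
        exact congrArg (· * _) (sum_card_bipartiteAbove_eq_sum_card_bipartiteBelow _)
    _ ≤ Fintype.card Γ * Fintype.card α := by
        gcongr
        simpa using sum_le_card_nsmul univ _ 1 fun g _ => hsub g
    _ = Fintype.card α * Fintype.card Γ := mul_comm _ _

end MulAction

namespace SimpleGraph

variable {V W : Type*} {G : SimpleGraph V} {H : SimpleGraph W}

theorem IsClique.eq_of_map_mem_isIndepSet {K : Set V} {S : Set W} (hK : G.IsClique K)
    (hS : H.IsIndepSet S) (f : G →g H) {k k' : V} (hk : k ∈ K) (hk' : k' ∈ K)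
    (hfk : f k ∈ S) (hfk' : f k' ∈ S) : k = k' := by
  by_contra hne
  have hadj := f.map_adj (hK hk hk' hne)
  exact hS hfk hfk' hadj.ne hadj

end SimpleGraph

theorem indepNum'_eq_indepNum {V : Type*} (G : SimpleGraph V) : indepNum' G = G.indepNum := by
  simp only [indepNum', indepNum, isNIndepSet_iff, isIndepSet_iff, Set.Pairwise, mem_coe]
  grind

/-- For a finite vertex-transitive graph, `α(G) * ω(G) ≤ |V(G)|`. -/
theorem stmt_11 {V : Type*} [Fintype V] (G : SimpleGraph V)
    (htrans : ∀ u v : V, ∃ e : G ≃g G, e u = v) :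
    indepNum' G * G.cliqueNum ≤ Fintype.card V := by
  have : MulAction.IsPretransitive (G ≃g G) V := ⟨htrans⟩
  have : Finite (G ≃g G) := DFunLike.finite _
  have := Fintype.ofFinite (G ≃g G)
  obtain ⟨S, hS⟩ := G.exists_isNIndepSet_indepNum
  obtain ⟨K, hK⟩ := G.exists_isNClique_cliqueNum
  rw [indepNum'_eq_indepNum, ← hS.card_eq, ← hK.card_eq, mul_comm]
  exact MulAction.card_mul_card_le_card_of_forall_smul_mem
    fun (g : G ≃g G) _ hk _ hk' hgk hgk' =>
      hK.isClique.eq_of_map_mem_isIndepSet hS.isIndepSet g.toHom hk hk' hgk hgk'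
end

section
/- For every prime power q, there exists a simple bipartite graph on 2(q² + q + 1) vertices (with both parts of size q² + q + 1) that is (q + 1)-regular and contains no cycle of length 4. -/
open SimpleGraph

/-!
The graph is the point–line incidence graph of the projective plane over the field with `q`
elements. It has `q² + q + 1` points and as many lines, every point lies on `q + 1` lines and
every line carries `q + 1` points, and a 4-cycle would be two distinct points lying on two
distinct common lines, which the plane's axioms forbid.
-/

open Configuration
open scoped LinearAlgebra.Projectivization

namespace ContainsCycleLen

variable {V W : Type*} {G : SimpleGraph V} {H : SimpleGraph W} {k : ℕ}

theorem of_hom (f : G →g H) (hf : Function.Injective f) (h : ContainsCycleLen G k) :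
    ContainsCycleLen H k := by
  obtain ⟨u, w, hw, rfl⟩ := h
  exact ⟨f u, w.map f, hw.map hf, w.length_map f⟩

theorem exists_adj_of_four (h : ContainsCycleLen G 4) :
    ∃ a b c d, G.Adj a b ∧ G.Adj b c ∧ G.Adj c d ∧ G.Adj d a ∧ a ≠ c ∧ b ≠ d := by
  obtain ⟨u, w, hw, hlen⟩ := h
  rcases w with _ | ⟨h₁, _ | ⟨h₂, _ | ⟨h₃, _ | ⟨h₄, _ | ⟨h₅, w⟩⟩⟩⟩⟩ <;>
    simp only [Walk.length_cons, Walk.length_nil] at hlen <;> try omega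
  have hnodup := hw.support_nodup
  simp only [Walk.support_cons, Walk.support_nil, List.tail_cons, List.nodup_cons,
    List.mem_cons, List.not_mem_nil] at hnodup
  exact ⟨_, _, _, _, h₁, h₂, h₃, h₄, by tauto, by tauto⟩

end ContainsCycleLen

namespace Configuration

variable (P L : Type*) [Membership P L]

def incidenceGraph : SimpleGraph (P ⊕ L) where
  Adj
    | .inl p, .inr l => p ∈ l
    | .inr l, .inl p => p ∈ l
    | _, _ => False
  symm := ⟨by rintro (p | l) (p' | l') h <;> exact h⟩
  loopless := ⟨by rintro (p | l) h <;> exact h⟩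

variable {P L}

@[simp] theorem incidenceGraph_adj_inl_inr {p : P} {l : L} :
    (incidenceGraph P L).Adj (.inl p) (.inr l) ↔ p ∈ l := Iff.rfl

@[simp] theorem incidenceGraph_adj_inr_inl {p : P} {l : L} :
    (incidenceGraph P L).Adj (.inr l) (.inl p) ↔ p ∈ l := Iff.rfl

@[simp] theorem not_incidenceGraph_adj_inl_inl {p p' : P} :
    ¬(incidenceGraph P L).Adj (.inl p) (.inl p') := id

@[simp] theorem not_incidenceGraph_adj_inr_inr {l l' : L} :
    ¬(incidenceGraph P L).Adj (.inr l) (.inr l') := id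

theorem incidenceGraph_neighborSet_inl (p : P) :
    (incidenceGraph P L).neighborSet (.inl p) = Sum.inr '' {l | p ∈ l} := by
  ext (p' | l) <;> simp

theorem incidenceGraph_neighborSet_inr (l : L) :
    (incidenceGraph P L).neighborSet (.inr l) = Sum.inl '' {p | p ∈ l} := by
  ext (p | l') <;> simp

theorem ncard_incidenceGraph_neighborSet_inl (p : P) :
    ((incidenceGraph P L).neighborSet (.inl p)).ncard = lineCount L p := by
  rw [incidenceGraph_neighborSet_inl, Set.ncard_image_of_injective _ Sum.inr_injective]
  exact (Nat.card_coe_set_eq _).symm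

theorem ncard_incidenceGraph_neighborSet_inr (l : L) :
    ((incidenceGraph P L).neighborSet (.inr l)).ncard = pointCount P l := by
  rw [incidenceGraph_neighborSet_inr, Set.ncard_image_of_injective _ Sum.inl_injective]
  exact (Nat.card_coe_set_eq _).symm

theorem ProjectivePlane.ncard_incidenceGraph_neighborSet [ProjectivePlane P L] [Finite P]
    [Finite L] (v : P ⊕ L) :
    ((incidenceGraph P L).neighborSet v).ncard = ProjectivePlane.order P L + 1 := by
  rcases v with p | l
  · rw [ncard_incidenceGraph_neighborSet_inl, ProjectivePlane.lineCount_eq]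
  · rw [ncard_incidenceGraph_neighborSet_inr, ProjectivePlane.pointCount_eq]

theorem Nondegenerate.not_containsCycleLen_four_incidenceGraph [Nondegenerate P L] :
    ¬ContainsCycleLen (incidenceGraph P L) 4 := by
  intro h
  obtain ⟨a, b, c, d, hab, hbc, hcd, hda, hac, hbd⟩ := h.exists_adj_of_four
  rcases a with p₁ | l₁ <;> rcases b with p₂ | l₂ <;> rcases c with p₃ | l₃ <;>
    rcases d with p₄ | l₄ <;>
    simp only [incidenceGraph_adj_inl_inr, incidenceGraph_adj_inr_inl,
      not_incidenceGraph_adj_inl_inl, not_incidenceGraph_adj_inr_inr] at hab hbc hcd hda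
  · rcases Nondegenerate.eq_or_eq hab hbc hda hcd with rfl | rfl
    · exact hac rfl
    · exact hbd rfl
  · rcases Nondegenerate.eq_or_eq hab hda hbc hcd with rfl | rfl
    · exact hbd rfl
    · exact hac rfl

theorem ProjectivePlane.exists_bipartite_regular_not_containsCycleLen_four
    [ProjectivePlane P L] [Finite P] [Finite L] {n : ℕ} (hn : ProjectivePlane.order P L = n) :
    ∃ G : SimpleGraph (Fin (n ^ 2 + n + 1) ⊕ Fin (n ^ 2 + n + 1)),
      (∀ i j, ¬G.Adj (.inl i) (.inl j)) ∧ (∀ i j, ¬G.Adj (.inr i) (.inr j)) ∧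
      (∀ v, (G.neighborSet v).ncard = n + 1) ∧ ¬ContainsCycleLen G 4 := by
  have := Fintype.ofFinite P
  have := Fintype.ofFinite L
  let e : Fin (n ^ 2 + n + 1) ⊕ Fin (n ^ 2 + n + 1) ≃ P ⊕ L :=
    ((Fintype.equivFinOfCardEq (hn ▸ ProjectivePlane.card_points P L)).sumCongr
      (Fintype.equivFinOfCardEq (hn ▸ ProjectivePlane.card_lines P L))).symm
  refine ⟨(incidenceGraph P L).comap e, fun _ _ ↦ id, fun _ _ ↦ id, fun v ↦ ?_, fun h ↦ ?_⟩
  · rw [SimpleGraph.neighborSet_comap, Set.ncard_preimage_of_injective_subset_range e.injective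
      (by simp), ProjectivePlane.ncard_incidenceGraph_neighborSet, hn]
  · exact Nondegenerate.not_containsCycleLen_four_incidenceGraph
      (h.of_hom (SimpleGraph.Embedding.comap e.toEmbedding _).toHom e.injective)

theorem ofField.order_eq_card (K : Type*) [Field K] [Finite K] [DecidableEq K] :
    ProjectivePlane.order (ℙ K (Fin 3 → K)) (ℙ K (Fin 3 → K)) = Nat.card K := by
  have := Fintype.ofFinite (ℙ K (Fin 3 → K))
  have hcard := Projectivization.card_of_finrank K (Fin 3 → K) (Module.finrank_fin_fun K)
  rw [Nat.card_eq_fintype_card, ProjectivePlane.card_points _ (ℙ K (Fin 3 → K)),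
    Finset.sum_range_succ, Finset.sum_range_succ, Finset.sum_range_one] at hcard
  have hmono : StrictMono fun m : ℕ ↦ m ^ 2 + m + 1 := fun a b hab ↦ by dsimp only; gcongr
  exact hmono.injective (by linarith)

end Configuration

/-- Reiman: for every prime power `q` there is a bipartite `(q+1)`-regular
`C₄`-free graph with both parts of size `q² + q + 1`. -/
theorem stmt_12 (q : ℕ) (hq : IsPrimePow q) :
    ∃ G : SimpleGraph (Fin (q ^ 2 + q + 1) ⊕ Fin (q ^ 2 + q + 1)),
      (∀ i j, ¬G.Adj (Sum.inl i) (Sum.inl j)) ∧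
      (∀ i j, ¬G.Adj (Sum.inr i) (Sum.inr j)) ∧
      (∀ v, (G.neighborSet v).ncard = q + 1) ∧
      ¬ContainsCycleLen G 4 := by
  obtain ⟨p, n, hp, hn, rfl⟩ := hq
  have : Fact p.Prime := ⟨Nat.prime_iff.mpr hp⟩
  classical
  have horder := ofField.order_eq_card (GaloisField p n)
  rw [GaloisField.card p n hn.ne'] at horder
  exact ProjectivePlane.exists_bipartite_regular_not_containsCycleLen_four horder
end

section
/- For every even integer n ≥ 4: 2^{n/2} · C(n, n/2)^{−1} · M(n,4) ≤ RP(n/2) ≤ M(n,4), where C denotes the binomial coefficient. -/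
/-! Permutations `π` of `Fin m` correspond to the perfect matchings of `Fin m ⊕ Fin m` joining
`inl i` to `inr (π i)`, and the union of two such matchings contains a `4`-cycle exactly when
the permutations are reversing; this gives `RP(m) ≤ M(2m, 4)`.

Conversely, a perfect matching on `2m` vertices crosses (has exactly one end of every edge in) at
least `2^m` of the `m`-sets `A`. The members of a `C₄`-creating family crossing a fixed `A` are
matchings between `A` and its complement, hence, after numbering both sides, pairwise reversing
permutations; so each `A` is crossed by at most `RP(m)` of them. Double counting the pairs
(matching, crossed set) gives `2^m M(2m, 4) ≤ C(2m, m) RP(m)`. -/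

open SimpleGraph

/-- Two permutations are reversing if some pair of coordinates carries the
same two values in opposite orders. -/
def Reversing {m : ℕ} (π₁ π₂ : Equiv.Perm (Fin m)) : Prop :=
  ∃ i j : Fin m, i < j ∧ π₁ i = π₂ j ∧ π₁ j = π₂ i

/-- The maximum size of a family of pairwise reversing permutations of `[m]`. -/
noncomputable def RP (m : ℕ) : ℕ :=
  sSup {t | ∃ F : Finset (Equiv.Perm (Fin m)), F.card = t ∧
    ∀ p₁ ∈ F, ∀ p₂ ∈ F, p₁ ≠ p₂ → Reversing p₁ p₂}

open Finset

section Families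

variable {α : Type*} [Fintype α] {P : Finset α → Prop}

lemma bddAbove_card : BddAbove {t | ∃ F : Finset α, #F = t ∧ P F} :=
  ⟨Fintype.card α, by rintro t ⟨F, rfl, -⟩; exact card_le_univ F⟩

lemma card_le_sSup_card {F : Finset α} (hF : P F) :
    #F ≤ sSup {t | ∃ F : Finset α, #F = t ∧ P F} :=
  le_csSup bddAbove_card ⟨F, rfl, hF⟩

lemma exists_card_eq_sSup_card (h : P ∅) :
    ∃ F : Finset α, #F = sSup {t | ∃ F : Finset α, #F = t ∧ P F} ∧ P F :=
  Nat.sSup_mem ⟨0, (⟨∅, rfl, h⟩ : ∃ F : Finset α, #F = 0 ∧ P F)⟩ bddAbove_card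

end Families

lemma card_le_RP {m : ℕ} {F : Finset (Equiv.Perm (Fin m))}
    (hF : ∀ p₁ ∈ F, ∀ p₂ ∈ F, p₁ ≠ p₂ → Reversing p₁ p₂) : #F ≤ RP m :=
  card_le_sSup_card hF

lemma exists_card_eq_RP (m : ℕ) : ∃ F : Finset (Equiv.Perm (Fin m)), #F = RP m ∧
    ∀ p₁ ∈ F, ∀ p₂ ∈ F, p₁ ≠ p₂ → Reversing p₁ p₂ :=
  exists_card_eq_sSup_card (by simp)

lemma card_le_Mnum_s17 {n k : ℕ} {F : Finset (SimpleGraph (Fin n))} (hpm : ∀ G ∈ F, IsPMGraph G)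
    (hk : ∀ G₁ ∈ F, ∀ G₂ ∈ F, G₁ ≠ G₂ → ContainsCycleLen (G₁ ⊔ G₂) k) : #F ≤ Mnum n k :=
  card_le_sSup_card ⟨hpm, hk⟩

lemma exists_card_eq_Mnum (n k : ℕ) : ∃ F : Finset (SimpleGraph (Fin n)), #F = Mnum n k ∧
    (∀ G ∈ F, IsPMGraph G) ∧ ∀ G₁ ∈ F, ∀ G₂ ∈ F, G₁ ≠ G₂ → ContainsCycleLen (G₁ ⊔ G₂) k :=
  exists_card_eq_sSup_card (by simp)

lemma reversing_of_ne {m : ℕ} {π₁ π₂ : Equiv.Perm (Fin m)} {i j : Fin m} (hij : i ≠ j)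
    (h₁ : π₁ i = π₂ j) (h₂ : π₁ j = π₂ i) : Reversing π₁ π₂ := by
  rcases hij.lt_or_gt with h | h
  · exact ⟨i, j, h, h₁, h₂⟩
  · exact ⟨j, i, h, h₂, h₁⟩

section FourCycles

variable {V : Type*} {G : SimpleGraph V}

lemma containsCycleLen_four {a b c d : V} (hab : G.Adj a b) (hbc : G.Adj b c) (hcd : G.Adj c d)
    (hda : G.Adj d a) (hac : a ≠ c) (hbd : b ≠ d) : ContainsCycleLen G 4 := by
  refine ⟨a, .cons hab (.cons hbc (.cons hcd (.cons hda .nil))), ?_, rfl⟩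
  have := hab.ne; have := hbc.ne; have := hcd.ne; have := hda.ne
  refine ⟨⟨⟨?_⟩, by simp⟩, ?_⟩
  · simp [Walk.edges]
    aesop
  · simp [Walk.support]
    aesop

lemma ContainsCycleLen.exists_adj_of_four_s17 (h : ContainsCycleLen G 4) :
    ∃ a b c d : V, a ≠ c ∧ b ≠ d ∧ G.Adj a b ∧ G.Adj b c ∧ G.Adj c d ∧ G.Adj d a := by
  obtain ⟨a, w, hw, hlen⟩ := h
  match w, hw, hlen with
  | .cons hab (.cons hbc (.cons hcd (.cons hda .nil))), hw, _ =>
    have hsupp := hw.support_nodup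
    simp only [Walk.support_cons, Walk.support_nil, List.tail_cons, List.nodup_cons,
      List.mem_cons, List.not_mem_nil] at hsupp
    exact ⟨_, _, _, _, by grind, by grind, hab, hbc, hcd, hda⟩

end FourCycles

def SimpleGraph.Crosses {V : Type*} (G : SimpleGraph V) (A : Finset V) : Prop :=
  ∀ u v, G.Adj u v → (u ∈ A ↔ v ∉ A)

namespace IsPMGraph

variable {V : Type*} {G H : SimpleGraph V}

lemma eq_of_adj_s17 (hG : IsPMGraph G) {v a b : V} (ha : G.Adj v a) (hb : G.Adj v b) : a = b :=
  (hG v).unique ha hb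

lemma eq_of_le (hG : IsPMGraph G) (hH : IsPMGraph H) (hle : G ≤ H) : G = H := by
  ext u v
  refine ⟨fun h => hle h, fun h => ?_⟩
  obtain ⟨w, hw⟩ := (hG u).exists
  rwa [hH.eq_of_adj_s17 h (hle hw)]

/-- Each vertex has one edge of each matching, so consecutive edges of the cycle alternate. -/
lemma exists_alternating_of_containsCycleLen_four (hG : IsPMGraph G) (hH : IsPMGraph H)
    (h : ContainsCycleLen (G ⊔ H) 4) :
    ∃ a b c d : V, a ≠ c ∧ b ≠ d ∧ G.Adj a b ∧ H.Adj b c ∧ G.Adj c d ∧ H.Adj d a := by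
  have alternate : ∀ a b c d : V, a ≠ c → b ≠ d → G.Adj a b → (G ⊔ H).Adj b c →
      (G ⊔ H).Adj c d → (G ⊔ H).Adj d a → H.Adj b c ∧ G.Adj c d ∧ H.Adj d a := by
    intro a b c d hac hbd hab hbc hcd hda
    have hbc : H.Adj b c := hbc.resolve_left fun h => hac (hG.eq_of_adj_s17 hab.symm h)
    have hcd : G.Adj c d := hcd.resolve_right fun h => hbd (hH.eq_of_adj_s17 hbc.symm h)
    exact ⟨hbc, hcd, hda.resolve_left fun h => hac (hG.eq_of_adj_s17 hcd.symm h).symm⟩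
  obtain ⟨a, b, c, d, hac, hbd, hab, hbc, hcd, hda⟩ := h.exists_adj_of_four_s17
  rcases hab with hab | hab
  · exact ⟨a, b, c, d, hac, hbd, hab, alternate a b c d hac hbd hab hbc hcd hda⟩
  · have had : G.Adj a d := (hda.resolve_right fun h => hbd (hH.eq_of_adj_s17 hab h.symm)).symm
    exact ⟨a, d, c, b, hac, hbd.symm, had,
      alternate a d c b hac hbd.symm had hcd.symm hbc.symm (Or.inr hab.symm)⟩

noncomputable def partner (hG : IsPMGraph G) (v : V) : V := (hG v).exists.choose

lemma adj_partner (hG : IsPMGraph G) (v : V) : G.Adj v (hG.partner v) :=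
  (hG v).exists.choose_spec

lemma partner_eq_of_adj (hG : IsPMGraph G) {v w : V} (h : G.Adj v w) : hG.partner v = w :=
  hG.eq_of_adj_s17 (hG.adj_partner v) h

lemma partner_involutive (hG : IsPMGraph G) : Function.Involutive hG.partner :=
  fun v => hG.partner_eq_of_adj (hG.adj_partner v).symm

lemma mem_image_partner [DecidableEq V] (hG : IsPMGraph G) {s : Finset V} {v : V} :
    v ∈ s.image hG.partner ↔ hG.partner v ∈ s := by
  refine ⟨?_, fun h => mem_image.2 ⟨_, h, hG.partner_involutive v⟩⟩
  rw [mem_image]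
  rintro ⟨w, hw, rfl⟩
  rwa [hG.partner_involutive]

lemma crosses_iff (hG : IsPMGraph G) {A : Finset V} :
    G.Crosses A ↔ ∀ v, v ∈ A ↔ hG.partner v ∉ A :=
  ⟨fun hA v => hA v _ (hG.adj_partner v), fun h u _ huv => hG.partner_eq_of_adj huv ▸ h u⟩

/-- The partner map sends a crossed set onto its complement. -/
lemma card_eq_of_crosses [Fintype V] [DecidableEq V] {m : ℕ} (hV : Fintype.card V = m + m)
    (hG : IsPMGraph G) {A : Finset V} (hA : G.Crosses A) : #A = m := by
  have hcompl : Aᶜ = A.image hG.partner := by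
    ext v
    rw [mem_compl, hG.mem_image_partner, hG.crosses_iff.1 hA, not_not]
  have := card_compl A
  rw [hcompl, card_image_of_injective _ hG.partner_involutive.injective, hV] at this
  omega

open scoped Classical in
/-- Orient each edge from its smaller to its larger end and let `R` be the set of tails; flipping
the edges of any `S ⊆ R` gives a set crossed by `G`, and distinct `S` give distinct sets. -/
lemma two_pow_le_card_crosses [Fintype V] [LinearOrder V] {m : ℕ}
    (hV : Fintype.card V = m + m) (hG : IsPMGraph G) :
    2 ^ m ≤ #{A ∈ powersetCard m univ | G.Crosses A} := by
  set f := hG.partner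
  have hf : Function.Involutive f := hG.partner_involutive
  have crosses_iff (A : Finset V) : G.Crosses A ↔ ∀ v, v ∈ A ↔ f v ∉ A := hG.crosses_iff
  set R : Finset V := {v | v < f v}
  have hfR : ∀ v, f v ∈ R ↔ v ∉ R := by
    intro v
    simp only [R, mem_filter, mem_univ, true_and, hf v, not_lt]
    exact ⟨le_of_lt, fun h => lt_of_le_of_ne h (hG.adj_partner v).ne'⟩
  have hR : G.Crosses R := (crosses_iff R).2 fun v => by rw [hfR, not_not]
  let flip (S : Finset V) : Finset V := S ∪ (R \ S).image f
  have mem_flip : ∀ S ⊆ R, ∀ v, v ∈ flip S ↔ v ∈ S ∨ (v ∉ R ∧ f v ∉ S) := by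
    intro S _ v
    rw [mem_union, hG.mem_image_partner, mem_sdiff, hfR]
  have flip_crosses : ∀ S ⊆ R, G.Crosses (flip S) := by
    intro S hS
    refine (crosses_iff _).2 fun v => ?_
    rw [mem_flip S hS, mem_flip S hS, hf, hfR]
    have := @hS v
    have := @hS (f v)
    have := hfR v
    tauto
  have flip_inter : ∀ S ⊆ R, flip S ∩ R = S := by
    intro S hS
    ext v
    rw [mem_inter, mem_flip S hS]
    have := @hS v
    tauto
  calc 2 ^ m = #R.powerset := by rw [card_powerset, hG.card_eq_of_crosses hV hR]
    _ ≤ _ := by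
      refine card_le_card_of_injOn flip (fun S hS => ?_) (fun S hS S' hS' h => ?_)
      · have hS := mem_powerset.1 hS
        exact mem_filter.2 ⟨mem_powersetCard_univ.2 (hG.card_eq_of_crosses hV (flip_crosses S hS)),
          flip_crosses S hS⟩
      · rw [← flip_inter S (mem_powerset.1 hS), ← flip_inter S' (mem_powerset.1 hS'), h]

end IsPMGraph

section MatchingGraph

variable {m : ℕ} {V : Type*} (e : Fin m ⊕ Fin m ≃ V)

def matchingGraph (π : Equiv.Perm (Fin m)) : SimpleGraph V :=
  fromRel fun u v => ∃ i, u = e (.inl i) ∧ v = e (.inr (π i))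

variable {e} {π π₁ π₂ : Equiv.Perm (Fin m)}

@[simp]
lemma matchingGraph_adj_inl {i : Fin m} {v : V} :
    (matchingGraph e π).Adj (e (.inl i)) v ↔ v = e (.inr (π i)) := by
  simp only [matchingGraph, fromRel_adj, EmbeddingLike.apply_eq_iff_eq, Sum.inl.injEq,
    reduceCtorEq, and_false, exists_false, or_false]
  constructor
  · rintro ⟨-, i, rfl, rfl⟩
    rfl
  · rintro rfl
    exact ⟨by simp, i, rfl, rfl⟩

@[simp]
lemma matchingGraph_adj_inr {j : Fin m} {v : V} :
    (matchingGraph e π).Adj (e (.inr j)) v ↔ v = e (.inl (π.symm j)) := by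
  simp only [matchingGraph, fromRel_adj, EmbeddingLike.apply_eq_iff_eq, Sum.inr.injEq,
    reduceCtorEq, false_and, exists_false, false_or]
  constructor
  · rintro ⟨-, i, rfl, rfl⟩
    simp
  · rintro rfl
    exact ⟨by simp, _, rfl, by simp⟩

lemma isPMGraph_matchingGraph : IsPMGraph (matchingGraph e π) := by
  intro v
  obtain ⟨s | s, rfl⟩ := e.surjective v <;> simp

lemma matchingGraph_injective : Function.Injective (matchingGraph e) := by
  intro π₁ π₂ h
  refine Equiv.ext fun i => ?_
  have : (matchingGraph e π₂).Adj (e (.inl i)) (e (.inr (π₁ i))) := h ▸ by simp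
  simpa [eq_comm] using this

lemma containsCycleLen_four_matchingGraph_sup (h : Reversing π₁ π₂) :
    ContainsCycleLen (matchingGraph e π₁ ⊔ matchingGraph e π₂) 4 := by
  obtain ⟨i, j, hij, h₁, h₂⟩ := h
  refine containsCycleLen_four (a := e (.inl i)) (b := e (.inr (π₁ i))) (c := e (.inl j))
    (d := e (.inr (π₁ j))) ?_ ?_ ?_ ?_ ?_ ?_ <;> simp [h₁, h₂, hij.ne, hij.ne']

lemma reversing_of_containsCycleLen_four
    (h : ContainsCycleLen (matchingGraph e π₁ ⊔ matchingGraph e π₂) 4) : Reversing π₁ π₂ := by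
  have of_inl : ∀ (i : Fin m) (b c d : V), e (.inl i) ≠ c →
      (matchingGraph e π₁).Adj (e (.inl i)) b → (matchingGraph e π₂).Adj b c →
      (matchingGraph e π₁).Adj c d → (matchingGraph e π₂).Adj d (e (.inl i)) →
      Reversing π₁ π₂ := by
    intro i b c d hac hab hbc hcd hda
    rw [matchingGraph_adj_inl] at hab
    subst hab
    rw [matchingGraph_adj_inr] at hbc
    subst hbc
    rw [matchingGraph_adj_inl] at hcd
    subst hcd
    rw [matchingGraph_adj_inr] at hda
    refine reversing_of_ne (j := π₂.symm (π₁ i)) (fun h => hac (h ▸ rfl)) (by simp) ?_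
    simpa [Equiv.eq_symm_apply, eq_comm] using hda
  obtain ⟨a, b, c, d, hac, hbd, hab, hbc, hcd, hda⟩ :=
    isPMGraph_matchingGraph.exists_alternating_of_containsCycleLen_four
      isPMGraph_matchingGraph h
  obtain ⟨i | j, rfl⟩ := e.surjective a
  · exact of_inl i b c d hac hab hbc hcd hda
  · rw [matchingGraph_adj_inr] at hab
    subst hab
    -- read the cycle backwards from `b`, which lies on the left
    exact of_inl _ _ d c hbd (by simp) hda.symm hcd.symm hbc.symm

lemma exists_eq_matchingGraph {G : SimpleGraph V} {A : Finset V} (hG : IsPMGraph G)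
    (hA : G.Crosses A) (hl : ∀ i, e (.inl i) ∈ A) : ∃ π, G = matchingGraph e π := by
  have exists_adj : ∀ i, ∃ j, G.Adj (e (.inl i)) (e (.inr j)) := by
    intro i
    obtain ⟨w, hw⟩ := (hG (e (.inl i))).exists
    obtain ⟨i' | j, rfl⟩ := e.surjective w
    · exact absurd (hl i') ((hA _ _ hw).1 (hl i))
    · exact ⟨j, hw⟩
  choose p hp using exists_adj
  have hp_inj : p.Injective := fun i i' h =>
    Sum.inl_injective (e.injective (hG.eq_of_adj_s17 (hp i).symm (h ▸ (hp i').symm)))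
  refine ⟨.ofBijective p (Finite.injective_iff_bijective.1 hp_inj),
    (isPMGraph_matchingGraph.eq_of_le hG ?_).symm⟩
  rintro _ _ ⟨-, ⟨i, rfl, rfl⟩ | ⟨i, rfl, rfl⟩⟩
  · exact hp i
  · exact (hp i).symm

end MatchingGraph

lemma exists_sumEquiv_of_card {m : ℕ} {V : Type*} [Fintype V] [DecidableEq V]
    (hV : Fintype.card V = m + m) {A : Finset V} (hA : #A = m) :
    ∃ e : Fin m ⊕ Fin m ≃ V, ∀ i, e (.inl i) ∈ A := by
  have hAc : Fintype.card {v // v ∉ A} = m := by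
    rw [Fintype.card_subtype_compl, Fintype.card_coe, hA, hV]
    omega
  let eA := Fintype.equivFinOfCardEq (Fintype.card_coe A ▸ hA)
  let eB := Fintype.equivFinOfCardEq hAc
  exact ⟨(eA.symm.sumCongr eB.symm).trans (Equiv.sumCompl (· ∈ A)), fun i => (eA.symm i).2⟩

open scoped Classical in
lemma card_filter_crosses_le_RP {m : ℕ} {V : Type*} [Fintype V] (hV : Fintype.card V = m + m)
    {A : Finset V} (hA : #A = m) {F : Finset (SimpleGraph V)} (hpm : ∀ G ∈ F, IsPMGraph G)
    (hc4 : ∀ G₁ ∈ F, ∀ G₂ ∈ F, G₁ ≠ G₂ → ContainsCycleLen (G₁ ⊔ G₂) 4) :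
    #{G ∈ F | G.Crosses A} ≤ RP m := by
  obtain ⟨e, he⟩ := exists_sumEquiv_of_card hV hA
  have : ∀ G ∈ {G ∈ F | G.Crosses A}, ∃ π, G = matchingGraph e π := fun G hG =>
    exists_eq_matchingGraph (hpm G (mem_filter.1 hG).1) (mem_filter.1 hG).2 he
  choose! π hπ using this
  calc #{G ∈ F | G.Crosses A} = #({G ∈ F | G.Crosses A}.image π) := by
        refine (card_image_of_injOn fun G hG G' hG' h => ?_).symm
        rw [hπ G hG, hπ G' hG', h]
    _ ≤ RP m := by
        refine card_le_RP ?_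
        simp only [mem_image]
        rintro _ ⟨G₁, h₁, rfl⟩ _ ⟨G₂, h₂, rfl⟩ hne
        refine reversing_of_containsCycleLen_four (e := e) ?_
        rw [← hπ G₁ h₁, ← hπ G₂ h₂]
        exact hc4 G₁ (mem_filter.1 h₁).1 G₂ (mem_filter.1 h₂).1 (fun h => hne (h ▸ rfl))

open scoped Classical in
lemma two_pow_mul_card_le {m : ℕ} {V : Type*} [Fintype V] [LinearOrder V]
    (hV : Fintype.card V = m + m) {F : Finset (SimpleGraph V)} (hpm : ∀ G ∈ F, IsPMGraph G)
    (hc4 : ∀ G₁ ∈ F, ∀ G₂ ∈ F, G₁ ≠ G₂ → ContainsCycleLen (G₁ ⊔ G₂) 4) :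
    2 ^ m * #F ≤ (m + m).choose m * RP m := by
  have := card_mul_le_card_mul (fun G A => G.Crosses A) (t := powersetCard m univ)
    (fun G hG => (hpm G hG).two_pow_le_card_crosses hV)
    (fun A hA => card_filter_crosses_le_RP hV (mem_powersetCard_univ.1 hA) hpm hc4)
  rwa [card_powersetCard, card_univ, hV, mul_comm] at this

lemma two_pow_mul_Mnum_le (m : ℕ) : 2 ^ m * Mnum (m + m) 4 ≤ (m + m).choose m * RP m := by
  obtain ⟨F, hF, hpm, hc4⟩ := exists_card_eq_Mnum (m + m) 4
  exact hF ▸ two_pow_mul_card_le (Fintype.card_fin _) hpm hc4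

open scoped Classical in
lemma RP_le_Mnum (m : ℕ) : RP m ≤ Mnum (m + m) 4 := by
  obtain ⟨F, hF, hrev⟩ := exists_card_eq_RP m
  rw [← hF, ← card_image_of_injective F (matchingGraph_injective (e := finSumFinEquiv))]
  refine card_le_Mnum_s17 (by simp [isPMGraph_matchingGraph]) ?_
  simp only [mem_image]
  rintro _ ⟨π₁, h₁, rfl⟩ _ ⟨π₂, h₂, rfl⟩ hne
  exact containsCycleLen_four_matchingGraph_sup (hrev π₁ h₁ π₂ h₂ fun h => hne (h ▸ rfl))

theorem stmt_17_general (n : ℕ) (hne : Even n) :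
    2 ^ (n / 2) * Mnum n 4 ≤ n.choose (n / 2) * RP (n / 2) ∧
    RP (n / 2) ≤ Mnum n 4 := by
  obtain ⟨m, rfl⟩ := hne
  rw [show (m + m) / 2 = m by omega]
  exact ⟨two_pow_mul_Mnum_le m, RP_le_Mnum m⟩

/-- `2^(n/2) C(n,n/2)⁻¹ M(n,4) ≤ RP(n/2) ≤ M(n,4)` for even `n ≥ 4`. -/
theorem stmt_17 (n : ℕ) (hn : 4 ≤ n) (hne : Even n) :
    2 ^ (n / 2) * Mnum n 4 ≤ n.choose (n / 2) * RP (n / 2) ∧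
    RP (n / 2) ≤ Mnum n 4 :=
  stmt_17_general n hne
end

section
/- Let m ≥ 2 and for a permutation π of {1,…,m} let M(π) be the perfect matching on vertex set {1,…,2m} consisting of the edges {i, π(i) + m} for i = 1,…,m. Then two permutations π₁, π₂ of {1,…,m} are reversing if and only if the union of the matchings M(π₁) and M(π₂) contains a cycle of length 4. -/
open SimpleGraph

/-- The perfect matching on `{1,…,2m}` associated to a permutation `π` of
`{1,…,m}`: its edges are `{i, π(i) + m}`. -/
def permMatching {m : ℕ} (π : Equiv.Perm (Fin m)) : SimpleGraph (Fin (2 * m)) :=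
  SimpleGraph.fromRel (fun a b => ∃ i : Fin m, (a : ℕ) = (i : ℕ) ∧ (b : ℕ) = (π i : ℕ) + m)

lemma adj_mk {m : ℕ} (π : Equiv.Perm (Fin m)) {a b : Fin (2*m)} (i : Fin m)
    (ha : (a:ℕ) = i) (hb : (b:ℕ) = π i + m) : (permMatching π).Adj a b := by
  rw [permMatching, SimpleGraph.fromRel_adj]
  refine ⟨?_, Or.inl ⟨i, ha, hb⟩⟩
  intro h
  rw [h, hb] at ha
  have := i.isLt
  omega

lemma adj_cases {m : ℕ} (π₁ π₂ : Equiv.Perm (Fin m)) {a b : Fin (2*m)}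
    (h : (permMatching π₁ ⊔ permMatching π₂).Adj a b) :
    ∃ ρ : Equiv.Perm (Fin m), (ρ = π₁ ∨ ρ = π₂) ∧
      ((∃ i : Fin m, (a:ℕ) = i ∧ (b:ℕ) = ρ i + m) ∨
       (∃ i : Fin m, (b:ℕ) = i ∧ (a:ℕ) = ρ i + m)) := by
  rcases h with h | h
  · rw [permMatching, SimpleGraph.fromRel_adj] at h
    exact ⟨π₁, Or.inl rfl, h.2⟩
  · rw [permMatching, SimpleGraph.fromRel_adj] at h
    exact ⟨π₂, Or.inr rfl, h.2⟩

lemma key {m : ℕ} (π₁ π₂ : Equiv.Perm (Fin m)) (a c : Fin m) (hac : a ≠ c)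
    (h1 : π₁ a = π₂ c) (h2 : π₁ c = π₂ a) : Reversing π₁ π₂ := by
  rcases lt_or_gt_of_ne hac with h | h
  · exact ⟨a, c, h, h1, h2⟩
  · exact ⟨c, a, h, h2, h1⟩

lemma final {m : ℕ} (π₁ π₂ ρ0 ρ1 ρ2 ρ3 : Equiv.Perm (Fin m))
    (h0 : ρ0 = π₁ ∨ ρ0 = π₂) (h1 : ρ1 = π₁ ∨ ρ1 = π₂)
    (h2 : ρ2 = π₁ ∨ ρ2 = π₂) (h3 : ρ3 = π₁ ∨ ρ3 = π₂)
    (a c : Fin m) (hac : a ≠ c)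
    (e1 : ρ0 a = ρ1 c) (e2 : ρ2 c = ρ3 a) (d1 : ρ0 a ≠ ρ3 a) : Reversing π₁ π₂ := by
  rcases h0 with rfl|rfl <;> rcases h1 with rfl|rfl <;> rcases h2 with rfl|rfl <;>
    rcases h3 with rfl|rfl <;>
    first
    | exact (hac (Equiv.injective _ e1)).elim
    | exact (hac ((Equiv.injective _ e2).symm)).elim
    | exact (d1 rfl).elim
    | exact key _ _ a c hac e1 e2
    | exact key _ _ a c hac e2.symm e1.symm

lemma cycle4_s18 {V : Type*} (G : SimpleGraph V) (A B C D : V)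
    (h1 : G.Adj A B) (h2 : G.Adj B C) (h3 : G.Adj C D) (h4 : G.Adj D A)
    (nAC : A ≠ C) (nBD : B ≠ D) : ContainsCycleLen G 4 := by
  refine ⟨A, .cons h1 (.cons h2 (.cons h3 (.cons h4 .nil))), ?_, by simp⟩
  have nAB := h1.ne
  have nBC := h2.ne
  have nCD := h3.ne
  have nDA := h4.ne
  rw [SimpleGraph.Walk.isCycle_def, SimpleGraph.Walk.isTrail_def]
  refine ⟨?_, by simp, ?_⟩
  · simp [Sym2.eq, Sym2.rel_iff']
    tauto
  · simp
    tauto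


/-- Two permutations of `[m]` are reversing iff the union of their associated
perfect matchings contains a cycle of length `4`. -/
theorem stmt_18 (m : ℕ) (hm : 2 ≤ m) (π₁ π₂ : Equiv.Perm (Fin m)) :
    Reversing π₁ π₂ ↔ ContainsCycleLen (permMatching π₁ ⊔ permMatching π₂) 4 := by
  constructor
  · rintro ⟨i, j, hij, hr1, hr2⟩
    have him := i.isLt; have hjm := j.isLt
    have h1m := (π₁ i).isLt; have h2m := (π₁ j).isLt
    have hij' : (i : ℕ) ≠ (j : ℕ) := fun h => (Fin.val_injective h ▸ hij).false
    have hpij : ((π₁ i : Fin m) : ℕ) ≠ ((π₁ j : Fin m) : ℕ) := by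
      intro h
      exact hij' (congrArg Fin.val (π₁.injective (Fin.val_injective h)))
    refine cycle4_s18 _ ⟨(i : ℕ), by omega⟩ ⟨(π₁ i : ℕ) + m, by omega⟩
      ⟨(j : ℕ), by omega⟩ ⟨(π₁ j : ℕ) + m, by omega⟩ ?_ ?_ ?_ ?_ ?_ ?_
    · exact Or.inl (adj_mk π₁ i rfl rfl)
    · exact Or.inr (adj_mk π₂ j rfl (by simp only []; rw [hr1])).symm
    · exact Or.inl (adj_mk π₁ j rfl rfl)
    · exact Or.inr (adj_mk π₂ i rfl (by simp only []; rw [hr2])).symm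
    · simp [Fin.ext_iff]; omega
    · simp [Fin.ext_iff]; omega
  · rintro ⟨u, w, hcyc, hl⟩
    cases w with
    | nil => simp at hl
    | cons h1 p =>
      next v1 =>
      cases p with
      | nil => simp at hl
      | cons h2 p =>
        next v2 =>
        cases p with
        | nil => simp at hl
        | cons h3 p =>
          next v3 =>
          cases p with
          | nil => simp at hl
          | cons h4 q =>
            next v4 =>
            cases q with
            | cons h5 q => simp at hl
            | nil =>
              have hnd := hcyc.support_nodup
              simp at hnd
              obtain ⟨⟨n12, n13, n1u⟩, ⟨n23, n2u⟩, n3u⟩ := hnd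
              obtain ⟨ρ0, hρ0, H0⟩ := adj_cases π₁ π₂ h1
              obtain ⟨ρ1, hρ1, H1⟩ := adj_cases π₁ π₂ h2
              obtain ⟨ρ2, hρ2, H2⟩ := adj_cases π₁ π₂ h3
              obtain ⟨ρ3, hρ3, H3⟩ := adj_cases π₁ π₂ h4
              rcases H0 with ⟨a, hua, hv1⟩ | ⟨b, hv1b, hu⟩
              · -- u small
                have ham := a.isLt; have h0m := (ρ0 a).isLt
                rcases H1 with ⟨i, hi, -⟩ | ⟨c, hv2c, hv1'⟩
                · have := i.isLt; omega
                have hcm := c.isLt; have h1m' := (ρ1 c).isLt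
                rcases H2 with ⟨c', hc', hv3⟩ | ⟨d, hd, hv2'⟩
                swap
                · have := (ρ2 d).isLt; omega
                have : c' = c := Fin.val_injective (by omega)
                rw [this] at hv3
                have h2m' := (ρ2 c).isLt
                rcases H3 with ⟨i, hi, -⟩ | ⟨a', hua', hv3'⟩
                · have := i.isLt; omega
                have : a' = a := Fin.val_injective (by omega)
                rw [this] at hv3'
                have h3m' := (ρ3 a).isLt
                have e1 : ρ0 a = ρ1 c := Fin.val_injective (by omega)
                have e2 : ρ2 c = ρ3 a := Fin.val_injective (by omega)
                have hac : a ≠ c := by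
                  intro h
                  exact n2u (Fin.val_injective (by rw [hv2c, hua, h])).symm
                have d1 : ρ0 a ≠ ρ3 a := by
                  intro h
                  exact n13 (Fin.val_injective (by rw [hv1, hv3', h]))
                exact final π₁ π₂ ρ0 ρ1 ρ2 ρ3 hρ0 hρ1 hρ2 hρ3 a c hac e1 e2 d1
              · -- u large
                have hbm := b.isLt; have h0m := (ρ0 b).isLt
                rcases H1 with ⟨b', hb', hv2⟩ | ⟨d, hd, hv1'⟩
                swap
                · have := (ρ1 d).isLt; omega
                have : b' = b := Fin.val_injective (by omega)
                rw [this] at hv2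
                have h1m' := (ρ1 b).isLt
                rcases H2 with ⟨i, hi, -⟩ | ⟨c, hv3c, hv2'⟩
                · have := i.isLt; omega
                have hcm := c.isLt; have h2m' := (ρ2 c).isLt
                rcases H3 with ⟨c', hc', hu'⟩ | ⟨a', hua', -⟩
                swap
                · have := a'.isLt; omega
                have : c' = c := Fin.val_injective (by omega)
                rw [this] at hu'
                have h3m' := (ρ3 c).isLt
                have e1 : ρ1 b = ρ2 c := Fin.val_injective (by omega)
                have e2 : ρ3 c = ρ0 b := Fin.val_injective (by omega)
                have hbc : b ≠ c := by
                  intro h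
                  exact n13 (Fin.val_injective (by rw [hv1b, hv3c, h]))
                have d1 : ρ1 b ≠ ρ0 b := by
                  intro h
                  exact n2u (Fin.val_injective (by rw [hv2, hu, h]))
                exact final π₁ π₂ ρ1 ρ2 ρ3 ρ0 hρ1 hρ2 hρ3 hρ0 b c hbc e1 e2 d1
end

section
/- For all integers n ≥ k ≥ 3, the maximum size of a family of paths (each a subgraph of the complete graph K_n, of arbitrary length) that are pairwise C_k-creating equals the maximum size of a family of Hamiltonian paths of K_n that are pairwise C_k-creating. -/
open SimpleGraph

/-- `H` is a path (of arbitrary length): its edges are exactly the edges of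
some path in the complete graph. -/
def IsPathGraph {n : ℕ} (H : SimpleGraph (Fin n)) : Prop :=
  ∃ (u v : Fin n) (p : (⊤ : SimpleGraph (Fin n)).Walk u v), p.IsPath ∧
    ∀ a b, H.Adj a b ↔ s(a, b) ∈ p.edges

/-! Every path of `K_n` extends to a Hamiltonian path, and Hamiltonian paths are acyclic. If two
members of a pairwise `C_k`-creating family of paths had the same extension, that Hamiltonian path
would contain the `C_k` of their union; so extending is injective on the family and produces a
pairwise `C_k`-creating family of Hamiltonian paths of the same size. Conversely, a Hamiltonian
path is a path. -/

namespace SimpleGraph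

/-- Rotated to start at its largest vertex, a cycle leaves and re-enters it through two distinct
smaller neighbours. -/
theorem isAcyclic_of_lower_neighbor_unique {V : Type*} [LinearOrder V] {G : SimpleGraph V}
    (h : ∀ ⦃u v w⦄, G.Adj u w → G.Adj v w → u < w → v < w → u = v) : G.IsAcyclic := by
  classical
  intro u c hc
  obtain ⟨m, hm, hmax⟩ := c.support.toFinset.exists_max_image id ⟨u, by simp⟩
  rw [List.mem_toFinset] at hm
  set c' := c.rotate m hm
  have hc' : c'.IsCycle := hc.rotate hm
  have hlt : ∀ x ∈ c'.support, G.Adj m x → x < m := fun x hx hadj =>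
    lt_of_le_of_ne (hmax x (by simpa [c'] using hx)) hadj.ne.symm
  have hsnd : G.Adj m c'.snd := c'.adj_snd hc'.not_nil
  have hpen : G.Adj m c'.penultimate := (c'.adj_penultimate hc'.not_nil).symm
  exact hc'.snd_ne_penultimate <| h hsnd.symm hpen.symm
    (hlt _ (c'.getVert_mem_support 1) hsnd) (hlt _ (c'.getVert_mem_support _) hpen)

theorem isAcyclic_hasse (α : Type*) [LinearOrder α] : (hasse α).IsAcyclic :=
  isAcyclic_of_lower_neighbor_unique fun _ _ _ huw hvw hu hv =>
    (hasse_adj.1 huw).resolve_right (fun h => h.lt.not_gt hu) |>.unique_left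
      ((hasse_adj.1 hvw).resolve_right (fun h => h.lt.not_gt hv))

theorem isAcyclic_pathGraph (n : ℕ) : (pathGraph n).IsAcyclic := isAcyclic_hasse _

namespace pathGraph

def walkUpTo (n : ℕ) : (m : ℕ) → (hm : m < n + 1) → (pathGraph (n + 1)).Walk 0 ⟨m, hm⟩
  | 0, _ => Walk.nil
  | m + 1, hm => (walkUpTo n m (by omega)).concat (pathGraph_adj.2 (Or.inl rfl))

variable {n : ℕ}

theorem val_le_of_mem_support_walkUpTo {m : ℕ} (hm : m < n + 1) {v : Fin (n + 1)}
    (hv : v ∈ (walkUpTo n m hm).support) : v.val ≤ m := by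
  induction m with
  | zero => simp_all [walkUpTo]
  | succ m ih =>
    rw [walkUpTo, Walk.support_concat, List.mem_append, List.mem_singleton] at hv
    rcases hv with hv | rfl
    · exact (ih _ hv).trans m.le_succ
    · rfl

theorem isPath_walkUpTo (m : ℕ) (hm : m < n + 1) : (walkUpTo n m hm).IsPath := by
  induction m with
  | zero => exact Walk.IsPath.nil
  | succ m ih =>
    exact (ih _).concat (fun h => by simpa using val_le_of_mem_support_walkUpTo _ h) _

theorem mem_edges_walkUpTo {m : ℕ} (hm : m < n + 1) {a b : Fin (n + 1)} :
    s(a, b) ∈ (walkUpTo n m hm).edges ↔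
      (pathGraph (n + 1)).Adj a b ∧ a.val ≤ m ∧ b.val ≤ m := by
  induction m with
  | zero =>
    simp only [Fin.zero_eta, walkUpTo, Walk.edges_nil, List.not_mem_nil, false_iff,
      pathGraph_adj]
    omega
  | succ m ih =>
    rw [walkUpTo, Walk.edges_concat, List.concat_eq_append, List.mem_append,
      List.mem_singleton, ih, Sym2.eq_iff]
    simp only [pathGraph_adj, Fin.ext_iff]
    omega

end pathGraph

end SimpleGraph

theorem Fin.exists_perm_apply_castLE_eq {m n : ℕ} (h : m ≤ n) (f : Fin m ↪ Fin n) :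
    ∃ τ : Equiv.Perm (Fin n), ∀ i, τ (Fin.castLE h i) = f i := by
  classical
  let e : Set.range (Fin.castLE h) ≃ Set.range f :=
    (Equiv.ofInjective _ (Fin.castLE_injective h)).symm.trans (Equiv.ofInjective f f.injective)
  refine ⟨e.extendSubtype, fun i => ?_⟩
  rw [Equiv.extendSubtype_apply_of_mem e _ ⟨i, rfl⟩]
  simp [e, Equiv.ofInjective_symm_apply]

theorem ContainsCycleLen.mono {V : Type*} {G H : SimpleGraph V} (hGH : G ≤ H) {k : ℕ}
    (hG : ContainsCycleLen G k) : ContainsCycleLen H k := by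
  obtain ⟨u, w, hw, hlen⟩ := hG
  exact ⟨u, w.mapLe hGH, hw.mapLe hGH, by simpa using hlen⟩

theorem ContainsCycleLen.not_isAcyclic {V : Type*} {G : SimpleGraph V} {k : ℕ}
    (hG : ContainsCycleLen G k) : ¬G.IsAcyclic := by
  obtain ⟨u, w, hw, -⟩ := hG
  exact fun hacyc => hacyc w hw

section PathGraphs

variable {n : ℕ}

theorem isHamPathGraph_map (τ : Equiv.Perm (Fin n)) :
    IsHamPathGraph ((pathGraph n).map τ.toEmbedding) :=
  ⟨τ.symm, fun a b => by
    rw [map_adj]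
    constructor
    · rintro ⟨u, v, huv, rfl, rfl⟩
      simpa using huv
    · exact fun h => ⟨τ.symm a, τ.symm b, h, by simp, by simp⟩⟩

theorem IsHamPathGraph.exists_eq_map {H : SimpleGraph (Fin n)} (hH : IsHamPathGraph H) :
    ∃ τ : Equiv.Perm (Fin n), H = (pathGraph n).map τ.toEmbedding := by
  obtain ⟨σ, hσ⟩ := hH
  refine ⟨σ.symm, ?_⟩
  ext a b
  rw [hσ, map_adj]
  constructor
  · exact fun h => ⟨σ a, σ b, h, by simp, by simp⟩
  · rintro ⟨u, v, huv, rfl, rfl⟩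
    simpa using huv

theorem IsHamPathGraph.isAcyclic {H : SimpleGraph (Fin n)} (hH : IsHamPathGraph H) :
    H.IsAcyclic := by
  obtain ⟨τ, rfl⟩ := hH.exists_eq_map
  exact (Iso.map τ (pathGraph n)).isAcyclic_iff.1 (isAcyclic_pathGraph n)

theorem isPathGraph_map {m : ℕ} (f : Fin (m + 1) ↪ Fin n) :
    IsPathGraph ((pathGraph (m + 1)).map f) := by
  let φ : pathGraph (m + 1) →g ⊤ := ⟨f, fun h => f.injective.ne h.ne⟩
  refine ⟨_, _, (pathGraph.walkUpTo m m m.lt_succ_self).map φ,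
    (pathGraph.isPath_walkUpTo _ _).map f.injective, fun a b => ?_⟩
  rw [map_adj, Walk.edges_map, List.mem_map]
  constructor
  · rintro ⟨i, j, hij, rfl, rfl⟩
    exact ⟨s(i, j), (pathGraph.mem_edges_walkUpTo _).2
      ⟨hij, Nat.le_of_lt_succ i.2, Nat.le_of_lt_succ j.2⟩, rfl⟩
  · rintro ⟨e, he, hab⟩
    induction e with
    | h i j =>
      have hij := ((pathGraph.mem_edges_walkUpTo _).1 he).1
      rcases Sym2.eq_iff.1 hab with ⟨rfl, rfl⟩ | ⟨rfl, rfl⟩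
      · exact ⟨i, j, hij, rfl, rfl⟩
      · exact ⟨j, i, hij.symm, rfl, rfl⟩

theorem IsHamPathGraph.isPathGraph (hn : 0 < n) {H : SimpleGraph (Fin n)}
    (hH : IsHamPathGraph H) : IsPathGraph H := by
  obtain ⟨m, rfl⟩ := Nat.exists_eq_add_one_of_ne_zero hn.ne'
  obtain ⟨τ, rfl⟩ := hH.exists_eq_map
  exact isPathGraph_map τ.toEmbedding

theorem IsPathGraph.exists_eq_map {H : SimpleGraph (Fin n)} (hH : IsPathGraph H) :
    ∃ (m : ℕ) (f : Fin m ↪ Fin n), H = (pathGraph m).map f := by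
  obtain ⟨u, v, p, hp, hH⟩ := hH
  let e := hp.pathGraphIsoToSubgraph
  refine ⟨_, ⟨fun i => (e i).1, Subtype.val_injective.comp e.injective⟩, ?_⟩
  ext a b
  rw [hH, map_adj, ← p.mem_edges_toSubgraph, Subgraph.mem_edgeSet]
  constructor
  · intro h
    exact ⟨e.symm ⟨a, h.fst_mem⟩, e.symm ⟨b, h.snd_mem⟩, e.symm.map_adj_iff.2 h,
      by simp, by simp⟩
  · rintro ⟨i, j, hij, rfl, rfl⟩
    exact e.map_adj_iff.2 hij

theorem IsPathGraph.exists_isHamPathGraph_le {H : SimpleGraph (Fin n)} (hH : IsPathGraph H) :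
    ∃ H', IsHamPathGraph H' ∧ H ≤ H' := by
  obtain ⟨m, f, rfl⟩ := hH.exists_eq_map
  have hmn : m ≤ n := Fin.le_of_embedding f
  obtain ⟨τ, hτ⟩ := Fin.exists_perm_apply_castLE_eq hmn f
  refine ⟨_, isHamPathGraph_map τ, ?_⟩
  rintro _ _ ⟨hne, i, j, hij, rfl, rfl⟩
  refine ⟨hne, Fin.castLE hmn i, Fin.castLE hmn j, ?_, by simp [hτ], by simp [hτ]⟩
  simpa [pathGraph_adj] using hij

end PathGraphs

section CycleCreatingFamilies

variable {V : Type*}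

def cycleCreatingFamilyCards (P : SimpleGraph V → Prop) (k : ℕ) : Set ℕ :=
  {m | ∃ F : Finset (SimpleGraph V), F.card = m ∧ (∀ G ∈ F, P G) ∧
    ∀ G₁ ∈ F, ∀ G₂ ∈ F, G₁ ≠ G₂ → ContainsCycleLen (G₁ ⊔ G₂) k}

theorem zero_mem_cycleCreatingFamilyCards (P : SimpleGraph V → Prop) (k : ℕ) :
    0 ∈ cycleCreatingFamilyCards P k :=
  ⟨∅, rfl, by simp, by simp⟩

theorem bddAbove_cycleCreatingFamilyCards [Finite V] (P : SimpleGraph V → Prop) (k : ℕ) :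
    BddAbove (cycleCreatingFamilyCards P k) :=
  (Set.finite_range (Finset.card : Finset (SimpleGraph V) → ℕ)).subset
    (by rintro _ ⟨F, rfl, -⟩; exact ⟨F, rfl⟩) |>.bddAbove

theorem cycleCreatingFamilyCards_mono {P Q : SimpleGraph V → Prop} (hPQ : ∀ G, P G → Q G)
    (k : ℕ) : cycleCreatingFamilyCards P k ⊆ cycleCreatingFamilyCards Q k := by
  rintro _ ⟨F, rfl, hP, hF⟩
  exact ⟨F, rfl, fun G hG => hPQ G (hP G hG), hF⟩

theorem cycleCreatingFamilyCards_subset_of_forall_exists_isAcyclic_le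
    {P Q : SimpleGraph V → Prop} (hext : ∀ G, P G → ∃ H, Q H ∧ G ≤ H)
    (hQ : ∀ H, Q H → H.IsAcyclic) (k : ℕ) :
    cycleCreatingFamilyCards P k ⊆ cycleCreatingFamilyCards Q k := by
  classical
  rintro _ ⟨F, rfl, hP, hF⟩
  choose g hgQ hle using fun G : F => hext G (hP G G.2)
  have hinj : Function.Injective g := by
    intro G₁ G₂ hg
    by_contra hne
    exact (hF _ G₁.2 _ G₂.2 (Subtype.coe_ne_coe.2 hne)).mono
      (sup_le (hle G₁) (hg ▸ hle G₂)) |>.not_isAcyclic (hQ _ (hgQ G₁))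
  refine ⟨F.attach.image g, by rw [Finset.card_image_of_injective _ hinj, Finset.card_attach],
    ?_, ?_⟩ <;> simp only [Finset.mem_image, Finset.mem_attach, true_and]
  · rintro _ ⟨G, rfl⟩
    exact hgQ G
  rintro _ ⟨G₁, rfl⟩ _ ⟨G₂, rfl⟩ hne
  exact (hF _ G₁.2 _ G₂.2 (Subtype.coe_ne_coe.2 fun h => hne (congrArg g h))).mono
    (sup_le_sup (hle G₁) (hle G₂))

end CycleCreatingFamilies

/-- The maximum size of a family of pairwise `C_k`-creating paths equals the
maximum size of a family of pairwise `C_k`-creating Hamiltonian paths. -/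
theorem stmt_19 (n k : ℕ) (hk : 3 ≤ k) (hn : k ≤ n) :
    sSup {m | ∃ F : Finset (SimpleGraph (Fin n)), F.card = m ∧
      (∀ G ∈ F, IsPathGraph G) ∧
      ∀ G₁ ∈ F, ∀ G₂ ∈ F, G₁ ≠ G₂ → ContainsCycleLen (G₁ ⊔ G₂) k}
      = Hnum n k := by
  change sSup (cycleCreatingFamilyCards IsPathGraph k) =
    sSup (cycleCreatingFamilyCards IsHamPathGraph k)
  apply le_antisymm <;> apply csSup_le_csSup (bddAbove_cycleCreatingFamilyCards _ _)
    ⟨0, zero_mem_cycleCreatingFamilyCards _ _⟩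
  · exact cycleCreatingFamilyCards_subset_of_forall_exists_isAcyclic_le
      (fun _ hG => hG.exists_isHamPathGraph_le) (fun _ hH => hH.isAcyclic) k
  · exact cycleCreatingFamilyCards_mono (fun _ hH => hH.isPathGraph (by omega)) k
end
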